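/- arXiv:2303.08604 — 8 statements merged into one kernel-verified Lean document; each statement's English description precedes it below -/
import Mathlib

section
/- For every t = 0,…,T−1 and all x' ≤ x, one has H_t(x) − H_t(x') ≤ ψ_t(x − x', x) and V_t(x) − V_t(x') ≤ φ_t(x − x', x). -/
open MeasureTheory Filter Set

theorem stmt8
    (T : ℕ) (hT : 2 ≤ T)
    (α : ℝ) (hα0 : 0 < α) (hα1 : α ≤ 1)
    (K : ℕ → ℝ) (hK0 : ∀ t, t < T → 0 ≤ K t)
    (hKmono : ∀ t, t + 2 ≤ T → α * K (t + 1) ≤ K t)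
    (ν : ℕ → MeasureTheory.Measure ℝ)
    (hprob : ∀ t, MeasureTheory.IsProbabilityMeasure (ν t))
    (hpos : ∀ t, ν t (Set.Iio 0) = 0)
    (F : ℕ → ℝ → ℝ) (hF : ∀ t x, F t x = (ν t (Set.Iic x)).toReal)
    (C : ℕ → ℝ → ℝ)
    (hCconv : ∀ t, t < T → ConvexOn ℝ Set.univ (C t))
    (hCcoer : ∀ t, t < T → Filter.Tendsto (C t) (Filter.cocompact ℝ) Filter.atTop)
    (θ : ℝ) (hθ : 0 < θ)
    (f : ℕ → ℤ → ℝ)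
    (hf : ∀ t (n : ℤ), f t n = F t (((n : ℝ) + 1) * θ) - F t ((n : ℝ) * θ))
    (Cm SU : ℕ → ℝ)
    (hCm : ∀ t, t < T → IsLeast {x | ∀ y, C t x ≤ C t y} (Cm t))
    (hSU : ∀ t, t < T → ∀ n0 : ℤ, (n0 : ℝ) * θ < Cm t → Cm t ≤ ((n0 : ℝ) + 1) * θ →
      IsLeast {w | (∃ m : ℤ, w = (m : ℝ) * θ) ∧ Cm t ≤ w ∧ C t ((n0 : ℝ) * θ) + K t < C t w} (SU t))
    (s S : ℕ → ℝ) (I Ibar : ℕ → ℝ)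
    (hsT1a : s (T - 1) ≤ Cm (T - 1))
    (hsT1b : C (T - 1) (s (T - 1)) = C (T - 1) (Cm (T - 1)) + K (T - 1))
    (hIbarT1 : Ibar (T - 1) = s (T - 1))
    (hI : ∀ t, t + 2 ≤ T →
      IsGreatest {w | (∃ m : ℤ, w = (m : ℝ) * θ) ∧ w < min (Ibar (t + 1) - θ) (Cm t)} (I t))
    (hIbar : ∀ t, t + 2 ≤ T →
      IsGreatest {w | (∃ m : ℤ, w = (m : ℝ) * θ) ∧ w ≤ I t ∧ C t (I t) + K t < C t w} (Ibar t - θ))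
    (H V : ℕ → ℝ → ℝ)
    (hHT1 : ∀ y, H (T - 1) y = C (T - 1) y)
    (hST1 : S (T - 1) = Cm (T - 1))
    (hV : ∀ t, t < T → ∀ y, V t y = if y < s t then H t (S t) + K t else H t y)
    (hHrec : ∀ t, t + 2 ≤ T → ∀ y,
      H t y = C t y + α * ∑' n : ℕ, V (t + 1) (y - ((n : ℝ) - 1) * θ) * f t ((n : ℤ) - 1))
    (hSdef : ∀ t, t + 2 ≤ T →
      IsGreatest {w | (∃ m : ℤ, w = (m : ℝ) * θ) ∧ I t ≤ w ∧ w ≤ SU t ∧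
        ∀ u, (∃ n : ℤ, u = (n : ℝ) * θ) → I t ≤ u → u ≤ SU t → H t w ≤ H t u} (S t))
    (hsdef0 : ∀ t, t + 2 ≤ T → K t = 0 → s t = S t)
    (hsdef1 : ∀ t, t + 2 ≤ T → 0 < K t →
      IsLeast {w | (∃ m : ℤ, w = (m : ℝ) * θ) ∧ Ibar t ≤ w ∧ w ≤ S t ∧ H t w ≤ H t (S t) + K t} (s t))
    (γ : ℕ → ℝ) (hγ : ∀ t, t < T → 0 ≤ γ t)
    (hLip : ∀ t, t < T → ∀ x y, |C t x - C t y| ≤ γ t * |x - y|)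
    (psi phi : ℕ → ℝ → ℝ → ℝ)
    (hpsiT1 : ∀ x y : ℝ, psi (T - 1) x y = γ (T - 1) * x)
    (hphiT1 : ∀ x y : ℝ, phi (T - 1) x y = if y < s (T - 1) then 0 else γ (T - 1) * x)
    (hpsiA : ∀ t, t + 2 ≤ T → ∀ x y : ℝ, y < s (t + 1) - θ → psi t x y = γ t * x)
    (hpsiB : ∀ t, t + 2 ≤ T → ∀ x y : ℝ, s (t + 1) - θ ≤ y → ∀ n : ℤ,
      ((n : ℝ) - 1) * θ ≤ y - s (t + 1) → y - s (t + 1) < (n : ℝ) * θ →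
      psi t x y = γ t * x
        + α * ∑ j ∈ Finset.Icc (-1 : ℤ) (n - 1), phi (t + 1) x (y - (j : ℝ) * θ) * f t j)
    (hphi : ∀ t, t + 2 ≤ T → ∀ x y : ℝ, phi t x y =
      if y < s t then 0 else if y - x < s t then psi t (y - s t) y else psi t x y)
    :
    ∀ t, t < T → ∀ x' x : ℝ, x' ≤ x →
      H t x - H t x' ≤ psi t (x - x') x ∧ V t x - V t x' ≤ phi t (x - x') x := by
  have hT1 : T - 1 < T := by omega
  -- F basic facts
  have hFmono : ∀ u : ℕ, ∀ a b : ℝ, a ≤ b → F u a ≤ F u b := by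
    intro u a b hab
    rw [hF, hF]
    have := hprob u
    exact ENNReal.toReal_mono (measure_ne_top _ _) (measure_mono (Set.Iic_subset_Iic.2 hab))
  have hF01 : ∀ u : ℕ, ∀ x : ℝ, F u x ≤ 1 := by
    intro u x
    rw [hF]
    have := hprob u
    calc (ν u (Set.Iic x)).toReal ≤ (ν u Set.univ).toReal :=
          ENNReal.toReal_mono (measure_ne_top _ _) (measure_mono (Set.subset_univ _))
      _ = 1 := by rw [measure_univ]; simp
  have hF0 : ∀ u : ℕ, ∀ x : ℝ, 0 ≤ F u x := fun u x => by
    rw [hF]; exact ENNReal.toReal_nonneg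
  have hfnn : ∀ u : ℕ, ∀ n : ℤ, 0 ≤ f u n := by
    intro u n
    rw [hf]
    have h1 : (n : ℝ) * θ ≤ ((n : ℝ) + 1) * θ := by nlinarith
    linarith [hFmono u _ _ h1]
  have hfsum : ∀ u : ℕ, Summable (fun m : ℕ => f u ((m : ℤ) - 1)) := by
    intro u
    apply summable_of_sum_range_le (c := 1) (fun m => hfnn u _)
    intro N
    have hterm : ∀ m : ℕ, f u ((m : ℤ) - 1) =
        F u ((((m + 1 : ℕ) : ℝ) - 1) * θ) - F u (((m : ℝ) - 1) * θ) := by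
      intro m
      rw [hf]
      have e1 : (((m : ℤ) - 1 : ℤ) : ℝ) + 1 = ((m + 1 : ℕ) : ℝ) - 1 := by push_cast; ring
      have e2 : (((m : ℤ) - 1 : ℤ) : ℝ) = (m : ℝ) - 1 := by push_cast; ring
      rw [e1, e2]
    rw [Finset.sum_congr rfl (fun m _ => hterm m),
      Finset.sum_range_sub (fun m : ℕ => F u (((m : ℝ) - 1) * θ))]
    have := hF01 u (((N : ℝ) - 1) * θ)
    have := hF0 u ((((0 : ℕ) : ℝ) - 1) * θ)
    linarith
  -- phi vanishes below s
  have hphi0 : ∀ u, u < T → ∀ p y : ℝ, y < s u → phi u p y = 0 := by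
    intro u hu p y hy
    by_cases h : u + 2 ≤ T
    · rw [hphi u h, if_pos hy]
    · have heq : u = T - 1 := by omega
      subst heq
      rw [hphiT1, if_pos hy]
  have main : ∀ d : ℕ, ∀ t : ℕ, t < T → T - 1 - t = d →
      ∀ x' x : ℝ, x' ≤ x →
        H t x - H t x' ≤ psi t (x - x') x ∧ V t x - V t x' ≤ phi t (x - x') x := by
    intro d
    induction d with
    | zero =>
      intro t ht hd x' x hxx
      have heq : t = T - 1 := by omega
      subst heq
      have hγnn := hγ (T - 1) hT1
      have habs : |x - x'| = x - x' := abs_of_nonneg (by linarith)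
      have hCd : C (T - 1) x - C (T - 1) x' ≤ γ (T - 1) * (x - x') := by
        calc C (T - 1) x - C (T - 1) x' ≤ |C (T - 1) x - C (T - 1) x'| := le_abs_self _
          _ ≤ γ (T - 1) * |x - x'| := hLip (T - 1) hT1 x x'
          _ = γ (T - 1) * (x - x') := by rw [habs]
      constructor
      · rw [hHT1, hHT1, hpsiT1]
        exact hCd
      · rw [hV (T - 1) hT1 x, hV (T - 1) hT1 x', hphiT1]
        by_cases hx : x < s (T - 1)
        · rw [if_pos hx, if_pos (lt_of_le_of_lt hxx hx), if_pos hx]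
          simp
        · rw [if_neg hx, if_neg hx]
          have hx2 : s (T - 1) ≤ x := not_lt.1 hx
          by_cases hx' : x' < s (T - 1)
          · rw [if_pos hx']
            rw [hHT1, hHT1, hST1]
            have habs2 : |x - s (T - 1)| = x - s (T - 1) := abs_of_nonneg (by linarith)
            have h1 : C (T - 1) x - C (T - 1) (s (T - 1)) ≤ γ (T - 1) * (x - s (T - 1)) := by
              calc C (T - 1) x - C (T - 1) (s (T - 1))
                  ≤ |C (T - 1) x - C (T - 1) (s (T - 1))| := le_abs_self _
                _ ≤ γ (T - 1) * |x - s (T - 1)| := hLip (T - 1) hT1 x _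
                _ = γ (T - 1) * (x - s (T - 1)) := by rw [habs2]
            have h2 : γ (T - 1) * (x - s (T - 1)) ≤ γ (T - 1) * (x - x') :=
              mul_le_mul_of_nonneg_left (by linarith) hγnn
            linarith [hsT1b]
          · rw [if_neg hx', hHT1, hHT1]
            exact hCd
    | succ d ih =>
      intro t ht hd
      have ht2 : t + 2 ≤ T := by omega
      have ht1 : t + 1 < T := by omega
      have htT : t < T := by omega
      have IH : ∀ a b : ℝ, a ≤ b → V (t + 1) b - V (t + 1) a ≤ phi (t + 1) (b - a) b :=
        fun a b hab => (ih (t + 1) ht1 (by omega) a b hab).2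
      have Vconst : ∀ w : ℝ, w < s (t + 1) → V (t + 1) w = H (t + 1) (S (t + 1)) + K (t + 1) := by
        intro w hw
        rw [hV (t + 1) ht1 w, if_pos hw]
      have hgsummable : ∀ y : ℝ,
          Summable (fun m : ℕ => V (t + 1) (y - ((m : ℝ) - 1) * θ) * f t ((m : ℤ) - 1)) := by
        intro y
        obtain ⟨M, hM⟩ : ∃ M : ℕ, ∀ m : ℕ, M ≤ m → y - ((m : ℝ) - 1) * θ < s (t + 1) := by
          obtain ⟨M, hM⟩ := exists_nat_gt ((y - s (t + 1)) / θ + 1)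
          refine ⟨M, fun m hm => ?_⟩
          have h1 : (y - s (t + 1)) / θ + 1 < (m : ℝ) :=
            lt_of_lt_of_le hM (by exact_mod_cast hm)
          have h2 : (y - s (t + 1)) / θ < (m : ℝ) - 1 := by linarith
          have h3 : y - s (t + 1) < ((m : ℝ) - 1) * θ := (div_lt_iff₀ hθ).1 h2
          linarith
        set c := H (t + 1) (S (t + 1)) + K (t + 1) with hc
        have h1 : Summable (fun m : ℕ => c * f t ((m : ℤ) - 1)) := (hfsum t).mul_left c
        have h2 : Summable (fun m : ℕ =>
            (V (t + 1) (y - ((m : ℝ) - 1) * θ) - c) * f t ((m : ℤ) - 1)) := by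
          apply summable_of_ne_finset_zero (s := Finset.range M)
          intro m hm
          have hMm : M ≤ m := by simpa using hm
          rw [Vconst _ (hM m hMm)]
          ring
        have heq : (fun m : ℕ => V (t + 1) (y - ((m : ℝ) - 1) * θ) * f t ((m : ℤ) - 1)) =
            (fun m : ℕ => c * f t ((m : ℤ) - 1) +
              (V (t + 1) (y - ((m : ℝ) - 1) * θ) - c) * f t ((m : ℤ) - 1)) := by
          funext m; ring
        rw [heq]
        exact h1.add h2
      have Hb : ∀ x' x : ℝ, x' ≤ x → H t x - H t x' ≤ psi t (x - x') x := by
        intro x' x hxx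
        have hγnn := hγ t htT
        have habs : |x - x'| = x - x' := abs_of_nonneg (by linarith)
        have hCd : C t x - C t x' ≤ γ t * (x - x') := by
          calc C t x - C t x' ≤ |C t x - C t x'| := le_abs_self _
            _ ≤ γ t * |x - x'| := hLip t htT x x'
            _ = γ t * (x - x') := by rw [habs]
        rw [hHrec t ht2 x, hHrec t ht2 x']
        by_cases hcase : x < s (t + 1) - θ
        · rw [hpsiA t ht2 _ x hcase]
          have heq : (∑' m : ℕ, V (t + 1) (x - ((m : ℝ) - 1) * θ) * f t ((m : ℤ) - 1)) =
              ∑' m : ℕ, V (t + 1) (x' - ((m : ℝ) - 1) * θ) * f t ((m : ℤ) - 1) := by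
            refine tsum_congr fun m => ?_
            have hm1 : (-1 : ℝ) ≤ (m : ℝ) - 1 := by
              have : (0 : ℝ) ≤ (m : ℝ) := Nat.cast_nonneg m
              linarith
            have hmθ : -θ ≤ ((m : ℝ) - 1) * θ := by nlinarith
            have h1 : x - ((m : ℝ) - 1) * θ < s (t + 1) := by linarith
            have h2 : x' - ((m : ℝ) - 1) * θ < s (t + 1) := by linarith
            rw [Vconst _ h1, Vconst _ h2]
          rw [heq]
          linarith
        · push_neg at hcase
          set n : ℤ := ⌊(x - s (t + 1)) / θ⌋ + 1 with hn
          have hfl1 := Int.floor_le ((x - s (t + 1)) / θ)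
          have hfl2 := Int.lt_floor_add_one ((x - s (t + 1)) / θ)
          have hn1 : ((n : ℝ) - 1) * θ ≤ x - s (t + 1) := by
            have e : (n : ℝ) - 1 = (⌊(x - s (t + 1)) / θ⌋ : ℝ) := by
              rw [hn]; push_cast; ring
            rw [e]
            exact (le_div_iff₀ hθ).1 hfl1
          have hn2 : x - s (t + 1) < (n : ℝ) * θ := by
            have h' : (x - s (t + 1)) / θ < (n : ℝ) := by
              rw [hn]; push_cast; linarith
            exact (div_lt_iff₀ hθ).1 h'
          have hn0 : 0 ≤ n := by
            have h1 : (-1 : ℝ) ≤ (x - s (t + 1)) / θ := by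
              rw [le_div_iff₀ hθ]; linarith
            have h2 : (-1 : ℤ) ≤ ⌊(x - s (t + 1)) / θ⌋ := by
              apply Int.le_floor.2
              push_cast
              exact h1
            omega
          set N : ℕ := n.toNat with hN
          have hNn : (N : ℤ) = n := Int.toNat_of_nonneg hn0
          rw [hpsiB t ht2 (x - x') x hcase n hn1 hn2]
          have hr0 : ∀ m : ℕ, N + 1 ≤ m →
              phi (t + 1) (x - x') (x - ((m : ℝ) - 1) * θ) = 0 := by
            intro m hm
            apply hphi0 (t + 1) ht1
            have h1 : (n : ℤ) ≤ (m : ℤ) - 1 := by omega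
            have h1' : (n : ℝ) ≤ (m : ℝ) - 1 := by exact_mod_cast h1
            have h2 : (n : ℝ) * θ ≤ ((m : ℝ) - 1) * θ :=
              mul_le_mul_of_nonneg_right h1' hθ.le
            linarith
          have hrsum : Summable (fun m : ℕ =>
              phi (t + 1) (x - x') (x - ((m : ℝ) - 1) * θ) * f t ((m : ℤ) - 1)) := by
            apply summable_of_ne_finset_zero (s := Finset.range (N + 1))
            intro m hm
            rw [hr0 m (by simpa using hm)]
            exact zero_mul _
          have hs1' := hgsummable x
          have hs2 := hgsummable x'
          have hterm : ∀ m : ℕ,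
              V (t + 1) (x - ((m : ℝ) - 1) * θ) * f t ((m : ℤ) - 1) -
                V (t + 1) (x' - ((m : ℝ) - 1) * θ) * f t ((m : ℤ) - 1) ≤
              phi (t + 1) (x - x') (x - ((m : ℝ) - 1) * θ) * f t ((m : ℤ) - 1) := by
            intro m
            have hab : x' - ((m : ℝ) - 1) * θ ≤ x - ((m : ℝ) - 1) * θ := by linarith
            have h1 := IH _ _ hab
            have h2 : (x - ((m : ℝ) - 1) * θ) - (x' - ((m : ℝ) - 1) * θ) = x - x' := by ring
            rw [h2] at h1
            rw [← sub_mul]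
            exact mul_le_mul_of_nonneg_right h1 (hfnn t _)
          have hdiff : (∑' m : ℕ, V (t + 1) (x - ((m : ℝ) - 1) * θ) * f t ((m : ℤ) - 1)) -
              (∑' m : ℕ, V (t + 1) (x' - ((m : ℝ) - 1) * θ) * f t ((m : ℤ) - 1)) ≤
              ∑ j ∈ Finset.Icc (-1 : ℤ) (n - 1),
                phi (t + 1) (x - x') (x - (j : ℝ) * θ) * f t j := by
            rw [← Summable.tsum_sub hs1' hs2]
            have hle := Summable.tsum_le_tsum hterm (hs1'.sub hs2) hrsum
            refine hle.trans (le_of_eq ?_)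
            rw [tsum_eq_sum (s := Finset.range (N + 1))
              (fun m hm => by rw [hr0 m (by simpa using hm)]; exact zero_mul _)]
            refine Finset.sum_nbij' (i := fun m : ℕ => (m : ℤ) - 1)
              (j := fun j : ℤ => (j + 1).toNat) ?_ ?_ ?_ ?_ ?_
            · intro a ha
              simp only [Finset.mem_range] at ha
              simp only [Finset.mem_Icc]
              omega
            · intro a ha
              simp only [Finset.mem_Icc] at ha
              simp only [Finset.mem_range]
              omega
            · intro a ha
              simp only [Finset.mem_range] at ha
              show ((a : ℤ) - 1 + 1).toNat = a
              omega
            · intro a ha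
              simp only [Finset.mem_Icc] at ha
              show ((((a + 1).toNat : ℕ) : ℤ) - 1) = a
              omega
            · intro a ha
              have e : (((a : ℤ) - 1 : ℤ) : ℝ) = (a : ℝ) - 1 := by push_cast; ring
              rw [e]
          have hmul := mul_le_mul_of_nonneg_left hdiff hα0.le
          rw [mul_sub] at hmul
          linarith
      intro x' x hxx
      refine ⟨Hb x' x hxx, ?_⟩
      have hsS : H t (s t) ≤ H t (S t) + K t := by
        rcases eq_or_lt_of_le (hK0 t htT) with h0 | h0
        · rw [hsdef0 t ht2 h0.symm]
          linarith
        · exact (hsdef1 t ht2 h0).1.2.2.2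
      rw [hV t htT x, hV t htT x', hphi t ht2]
      by_cases hx : x < s t
      · rw [if_pos hx, if_pos (lt_of_le_of_lt hxx hx), if_pos hx]
        simp
      · rw [if_neg hx, if_neg hx]
        have hx2 : s t ≤ x := not_lt.1 hx
        by_cases hx' : x' < s t
        · rw [if_pos hx', if_pos (show x - (x - x') < s t by linarith)]
          have h1 := Hb (s t) x hx2
          linarith
        · have hx2' : s t ≤ x' := not_lt.1 hx'
          rw [if_neg hx', if_neg (show ¬ (x - (x - x') < s t) by push_neg; linarith)]
          exact Hb x' x hxx
  intro t ht x' x hxx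
  exact main (T - 1 - t) t ht rfl x' x hxx
end

section
/- For every t = 0,…,T−2, one has H_t(Ī_t − θ) > H_t(I_t) + K_t. -/
open MeasureTheory Filter Set

theorem stmt9
    (T : ℕ) (hT : 2 ≤ T)
    (α : ℝ) (hα0 : 0 < α) (hα1 : α ≤ 1)
    (K : ℕ → ℝ) (hK0 : ∀ t, t < T → 0 ≤ K t)
    (hKmono : ∀ t, t + 2 ≤ T → α * K (t + 1) ≤ K t)
    (ν : ℕ → MeasureTheory.Measure ℝ)
    (hprob : ∀ t, MeasureTheory.IsProbabilityMeasure (ν t))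
    (hpos : ∀ t, ν t (Set.Iio 0) = 0)
    (F : ℕ → ℝ → ℝ) (hF : ∀ t x, F t x = (ν t (Set.Iic x)).toReal)
    (C : ℕ → ℝ → ℝ)
    (hCconv : ∀ t, t < T → ConvexOn ℝ Set.univ (C t))
    (hCcoer : ∀ t, t < T → Filter.Tendsto (C t) (Filter.cocompact ℝ) Filter.atTop)
    (θ : ℝ) (hθ : 0 < θ)
    (f : ℕ → ℤ → ℝ)
    (hf : ∀ t (n : ℤ), f t n = F t (((n : ℝ) + 1) * θ) - F t ((n : ℝ) * θ))
    (Cm SU : ℕ → ℝ)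
    (hCm : ∀ t, t < T → IsLeast {x | ∀ y, C t x ≤ C t y} (Cm t))
    (hSU : ∀ t, t < T → ∀ n0 : ℤ, (n0 : ℝ) * θ < Cm t → Cm t ≤ ((n0 : ℝ) + 1) * θ →
      IsLeast {w | (∃ m : ℤ, w = (m : ℝ) * θ) ∧ Cm t ≤ w ∧ C t ((n0 : ℝ) * θ) + K t < C t w} (SU t))
    (s S : ℕ → ℝ) (I Ibar : ℕ → ℝ)
    (hsT1a : s (T - 1) ≤ Cm (T - 1))
    (hsT1b : C (T - 1) (s (T - 1)) = C (T - 1) (Cm (T - 1)) + K (T - 1))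
    (hIbarT1 : Ibar (T - 1) = s (T - 1))
    (hI : ∀ t, t + 2 ≤ T →
      IsGreatest {w | (∃ m : ℤ, w = (m : ℝ) * θ) ∧ w < min (Ibar (t + 1) - θ) (Cm t)} (I t))
    (hIbar : ∀ t, t + 2 ≤ T →
      IsGreatest {w | (∃ m : ℤ, w = (m : ℝ) * θ) ∧ w ≤ I t ∧ C t (I t) + K t < C t w} (Ibar t - θ))
    (H V : ℕ → ℝ → ℝ)
    (hHT1 : ∀ y, H (T - 1) y = C (T - 1) y)
    (hST1 : S (T - 1) = Cm (T - 1))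
    (hV : ∀ t, t < T → ∀ y, V t y = if y < s t then H t (S t) + K t else H t y)
    (hHrec : ∀ t, t + 2 ≤ T → ∀ y,
      H t y = C t y + α * ∑' n : ℕ, V (t + 1) (y - ((n : ℝ) - 1) * θ) * f t ((n : ℤ) - 1))
    (hSdef : ∀ t, t + 2 ≤ T →
      IsGreatest {w | (∃ m : ℤ, w = (m : ℝ) * θ) ∧ I t ≤ w ∧ w ≤ SU t ∧
        ∀ u, (∃ n : ℤ, u = (n : ℝ) * θ) → I t ≤ u → u ≤ SU t → H t w ≤ H t u} (S t))
    (hsdef0 : ∀ t, t + 2 ≤ T → K t = 0 → s t = S t)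
    (hsdef1 : ∀ t, t + 2 ≤ T → 0 < K t →
      IsLeast {w | (∃ m : ℤ, w = (m : ℝ) * θ) ∧ Ibar t ≤ w ∧ w ≤ S t ∧ H t w ≤ H t (S t) + K t} (s t))
    :
    ∀ t, t + 2 ≤ T → H t (I t) + K t < H t (Ibar t - θ) := by
  intro t h2
  have ht1T : t + 1 < T := by omega
  have hkey : Ibar (t+1) ≤ s (t+1) := by
    rcases eq_or_lt_of_le h2 with hEq | hLt
    · have hTeq : T - 1 = t + 1 := by omega
      rw [← hTeq, hIbarT1]
    · have h3 : t + 1 + 2 ≤ T := by omega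
      rcases (hK0 (t+1) ht1T).eq_or_lt with hK | hK
      · have hs : s (t+1) = S (t+1) := hsdef0 (t+1) h3 hK.symm
        obtain ⟨⟨⟨m, hm⟩, hle, hC⟩, _⟩ := hIbar (t+1) h3
        obtain ⟨⟨⟨m', hm'⟩, hImin⟩, _⟩ := hI (t+1) h3
        have hne : Ibar (t+1) - θ ≠ I (t+1) := by
          intro h; rw [h, ← hK] at hC; linarith
        have hlt : Ibar (t+1) - θ < I (t+1) := lt_of_le_of_ne hle hne
        have hIle' : Ibar (t+1) ≤ I (t+1) := by
          rw [hm] at hlt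
          rw [hm'] at hlt
          have hmm : m < m' := by
            by_contra hc
            push_neg at hc
            have : (m' : ℝ) ≤ m := by exact_mod_cast hc
            nlinarith
          have : (m : ℝ) + 1 ≤ m' := by exact_mod_cast hmm
          rw [hm']
          nlinarith [hm]
        obtain ⟨⟨_, hIle, _, _⟩, _⟩ := hSdef (t+1) h3
        rw [hs]; linarith
      · obtain ⟨⟨_, hIb, _, _⟩, _⟩ := hsdef1 (t+1) h3 hK
        exact hIb
  obtain ⟨⟨_, hIbI, hCineq⟩, _⟩ := hIbar t h2
  obtain ⟨⟨_, hImin⟩, _⟩ := hI t h2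
  have hImin' := lt_min_iff.mp hImin
  have hVeq : ∀ y, y ≤ I t →
      ∀ n : ℕ, V (t+1) (y - ((n:ℝ) - 1) * θ) = H (t+1) (S (t+1)) + K (t+1) := by
    intro y hy n
    have h1 : (0:ℝ) ≤ (n:ℝ) := n.cast_nonneg
    have hlt : y - ((n:ℝ) - 1) * θ < s (t+1) := by
      nlinarith [mul_nonneg h1 hθ.le, hImin'.1, hkey]
    rw [hV (t+1) ht1T, if_pos hlt]
  have hH1 := hHrec t h2 (I t)
  have hH2 := hHrec t h2 (Ibar t - θ)
  have htsum : (∑' n : ℕ, V (t + 1) (I t - ((n : ℝ) - 1) * θ) * f t ((n : ℤ) - 1))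
      = ∑' n : ℕ, V (t + 1) (Ibar t - θ - ((n : ℝ) - 1) * θ) * f t ((n : ℤ) - 1) := by
    apply tsum_congr; intro n
    rw [hVeq _ le_rfl n, hVeq _ hIbI n]
  rw [hH1, hH2, ← htsum]
  linarith
end

section
/- For every t = 0,…,T−1, one has H_t(s_t − θ) ≥ H_t(S_t) + K_t. -/
open Set

/-!
Since `I_t + θ < Ī_{t+1} ≤ s_{t+1}`, from any `y ≤ I_t` every demand realisation leaves the next
stage's inventory position below `s_{t+1}`, where `V_{t+1}` is constant; hence `H_t = C_t + const` on
`(-∞, I_t]`, and `H_t` is nonincreasing there because `I_t < C^m_t`. If `s_t - θ` still lies in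
the grid window searched by the definition of `s_t` (resp. `S_t` when `K_t = 0`), the claim is
the extremality of `s_t` (resp. `S_t`). Otherwise `s_t` sits at the left end of that window,
and the claim follows from the choice of `Ī_t` (resp. from the monotonicity of `C_t`). At `t = T - 1` the
claim is just the monotonicity of `C_{T-1}` to the left of its minimiser.
-/

lemma ConvexOn.antitoneOn_Iic_of_forall_le {C : ℝ → ℝ} (hC : ConvexOn ℝ univ C) {m : ℝ}
    (hm : ∀ y, C m ≤ C y) : AntitoneOn C (Iic m) := by
  intro x _ y hy hxy
  rcases (mem_Iic.1 hy).eq_or_lt with rfl | hym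
  · exact hm x
  · exact hC.le_left_of_right_le'' trivial trivial hxy hym (hm y)

/-- Membership in the grid `Z_θ = θℤ`. -/
def OnGrid (θ w : ℝ) : Prop := ∃ m : ℤ, w = m * θ

namespace OnGrid

variable {θ a b : ℝ}

lemma sub_self (ha : OnGrid θ a) : OnGrid θ (a - θ) := by
  obtain ⟨m, rfl⟩ := ha
  exact ⟨m - 1, by push_cast; ring⟩

lemma of_sub_self (ha : OnGrid θ (a - θ)) : OnGrid θ a := by
  obtain ⟨m, hm⟩ := ha
  exact ⟨m + 1, by push_cast; linarith⟩

lemma add_le_of_lt (hθ : 0 < θ) (ha : OnGrid θ a) (hb : OnGrid θ b) (hab : a < b) :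
    a + θ ≤ b := by
  obtain ⟨m, rfl⟩ := ha
  obtain ⟨n, rfl⟩ := hb
  have hmn : m + 1 ≤ n := by exact_mod_cast (mul_lt_mul_iff_of_pos_right hθ).1 hab
  have : ((m : ℝ) + 1) * θ ≤ n * θ := by gcongr; exact_mod_cast hmn
  linarith

lemma eq_of_le_of_lt_add (hθ : 0 < θ) (ha : OnGrid θ a) (hb : OnGrid θ b) (hab : a ≤ b)
    (hba : b < a + θ) : a = b :=
  hab.eq_or_lt.resolve_right fun h => (ha.add_le_of_lt hθ hb h).not_gt hba

end OnGrid

lemma tsum_shift_eq_of_forall_lt {V : ℝ → ℝ} {L c θ y : ℝ} (hθ : 0 < θ)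
    (hV : ∀ x < L, V x = c) (hy : y + θ < L) (g : ℕ → ℝ) :
    ∑' n : ℕ, V (y - ((n : ℝ) - 1) * θ) * g n = ∑' n : ℕ, c * g n := by
  refine tsum_congr fun n => ?_
  have : 0 ≤ (n : ℝ) * θ := by positivity
  rw [hV]
  linarith

/-- The thresholds `I_t, Ī_t, S_t, s_t` of one non-terminal stage, as defined in the paper. -/
structure IsThresholdStage (θ K I Ibar SU S s : ℝ) (C H : ℝ → ℝ) : Prop where
  onGrid_I : OnGrid θ I
  isGreatest_Ibar_sub : IsGreatest {w | OnGrid θ w ∧ w ≤ I ∧ C I + K < C w} (Ibar - θ)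
  isGreatest_S : IsGreatest {w | OnGrid θ w ∧ I ≤ w ∧ w ≤ SU ∧
    ∀ u, OnGrid θ u → I ≤ u → u ≤ SU → H w ≤ H u} S
  nonneg_K : 0 ≤ K
  s_eq_S : K = 0 → s = S
  isLeast_s : 0 < K → IsLeast {w | OnGrid θ w ∧ Ibar ≤ w ∧ w ≤ S ∧ H w ≤ H S + K} s

namespace IsThresholdStage

variable {θ K I Ibar SU S s : ℝ} {C H : ℝ → ℝ}

lemma Ibar_le_s (h : IsThresholdStage θ K I Ibar SU S s C H) (hθ : 0 < θ) : Ibar ≤ s := by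
  rcases h.nonneg_K.eq_or_lt with hK | hK
  · obtain ⟨⟨hIbar, hIbarI, hCIbar⟩, -⟩ := h.isGreatest_Ibar_sub
    have hlt : Ibar - θ < I := hIbarI.lt_of_ne fun heq => by
      rw [heq, ← hK, add_zero] at hCIbar
      exact hCIbar.false
    have := hIbar.add_le_of_lt hθ h.onGrid_I hlt
    rw [h.s_eq_S hK.symm]
    linarith [h.isGreatest_S.1.2.1]
  · exact (h.isLeast_s hK).1.2.1

lemma H_S_add_K_le (h : IsThresholdStage θ K I Ibar SU S s C H) (hθ : 0 < θ) {Cm Q : ℝ}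
    (hC : ConvexOn ℝ univ C) (hCm : ∀ y, C Cm ≤ C y) (hICm : I < Cm)
    (hflat : ∀ y ≤ I, H y = C y + Q) : H S + K ≤ H (s - θ) := by
  obtain ⟨⟨hS, hIS, hSSU, hSmin⟩, -⟩ := h.isGreatest_S
  rcases h.nonneg_K.eq_or_lt with hK | hK
  · rw [h.s_eq_S hK.symm, ← hK, add_zero]
    by_cases hIS' : I ≤ S - θ
    · exact hSmin _ hS.sub_self hIS' (by linarith)
    · obtain rfl : I = S := h.onGrid_I.eq_of_le_of_lt_add hθ hS hIS (by linarith)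
      have hCI : C I ≤ C (I - θ) := hC.antitoneOn_Iic_of_forall_le hCm
        (by simp only [mem_Iic]; linarith) hICm.le (by linarith)
      rw [hflat I le_rfl, hflat (I - θ) (by linarith)]
      linarith
  · obtain ⟨⟨hs, hIbars, hsS, -⟩, hsmin⟩ := h.isLeast_s hK
    obtain ⟨⟨hIbar, hIbarI, hCIbar⟩, -⟩ := h.isGreatest_Ibar_sub
    by_cases hIbars' : Ibar ≤ s - θ
    · by_contra! hlt
      have := hsmin ⟨hs.sub_self, hIbars', by linarith, hlt.le⟩
      linarith
    · obtain rfl : Ibar = s := hIbar.of_sub_self.eq_of_le_of_lt_add hθ hs hIbars (by linarith)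
      calc H S + K ≤ H I + K := by gcongr; exact hSmin I h.onGrid_I le_rfl (hIS.trans hSSU)
        _ = C I + K + Q := by rw [hflat I le_rfl]; ring
        _ ≤ C (Ibar - θ) + Q := by linarith
        _ = H (Ibar - θ) := (hflat _ hIbarI).symm

end IsThresholdStage

theorem stmt10_general
    (T : ℕ)
    (α : ℝ)
    (K : ℕ → ℝ) (hK0 : ∀ t, t < T → 0 ≤ K t)
    (C : ℕ → ℝ → ℝ)
    (hCconv : ∀ t, t < T → ConvexOn ℝ Set.univ (C t))
    (θ : ℝ) (hθ : 0 < θ)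
    (f : ℕ → ℤ → ℝ)
    (Cm SU : ℕ → ℝ)
    (hCm : ∀ t, t < T → IsLeast {x | ∀ y, C t x ≤ C t y} (Cm t))
    (s S : ℕ → ℝ) (I Ibar : ℕ → ℝ)
    (hsT1a : s (T - 1) ≤ Cm (T - 1))
    (hsT1b : C (T - 1) (s (T - 1)) = C (T - 1) (Cm (T - 1)) + K (T - 1))
    (hIbarT1 : Ibar (T - 1) = s (T - 1))
    (hI : ∀ t, t + 2 ≤ T →
      IsGreatest {w | (∃ m : ℤ, w = (m : ℝ) * θ) ∧ w < min (Ibar (t + 1) - θ) (Cm t)} (I t))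
    (hIbar : ∀ t, t + 2 ≤ T →
      IsGreatest {w | (∃ m : ℤ, w = (m : ℝ) * θ) ∧ w ≤ I t ∧ C t (I t) + K t < C t w} (Ibar t - θ))
    (H V : ℕ → ℝ → ℝ)
    (hHT1 : ∀ y, H (T - 1) y = C (T - 1) y)
    (hST1 : S (T - 1) = Cm (T - 1))
    (hV : ∀ t, t < T → ∀ y, V t y = if y < s t then H t (S t) + K t else H t y)
    (hHrec : ∀ t, t + 2 ≤ T → ∀ y,
      H t y = C t y + α * ∑' n : ℕ, V (t + 1) (y - ((n : ℝ) - 1) * θ) * f t ((n : ℤ) - 1))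
    (hSdef : ∀ t, t + 2 ≤ T →
      IsGreatest {w | (∃ m : ℤ, w = (m : ℝ) * θ) ∧ I t ≤ w ∧ w ≤ SU t ∧
        ∀ u, (∃ n : ℤ, u = (n : ℝ) * θ) → I t ≤ u → u ≤ SU t → H t w ≤ H t u} (S t))
    (hsdef0 : ∀ t, t + 2 ≤ T → K t = 0 → s t = S t)
    (hsdef1 : ∀ t, t + 2 ≤ T → 0 < K t →
      IsLeast {w | (∃ m : ℤ, w = (m : ℝ) * θ) ∧ Ibar t ≤ w ∧ w ≤ S t ∧ H t w ≤ H t (S t) + K t} (s t))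
    :
    ∀ t, t < T → H t (S t) + K t ≤ H t (s t - θ) := by
  intro t ht
  obtain rfl | hlast : t = T - 1 ∨ t + 2 ≤ T := by omega
  · rw [hHT1, hHT1, hST1, ← hsT1b]
    exact (hCconv _ ht).antitoneOn_Iic_of_forall_le (hCm _ ht).1
      (by simp only [mem_Iic]; linarith) hsT1a (by linarith)
  have stage : ∀ t, t + 2 ≤ T →
      IsThresholdStage θ (K t) (I t) (Ibar t) (SU t) (S t) (s t) (C t) (H t) := fun t ht =>
    ⟨(hI t ht).1.1, hIbar t ht, hSdef t ht, hK0 t (by omega), hsdef0 t ht, hsdef1 t ht⟩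
  have hnext : Ibar (t + 1) ≤ s (t + 1) := by
    obtain hlast' | hlast' : t + 1 = T - 1 ∨ t + 3 ≤ T := by omega
    · rw [hlast', hIbarT1]
    · exact (stage (t + 1) hlast').Ibar_le_s hθ
  obtain ⟨hIbar', hICm⟩ := lt_min_iff.1 (hI t hlast).1.2
  refine (stage t hlast).H_S_add_K_le hθ (hCconv t ht) (hCm t ht).1 hICm
    (Q := α * ∑' n : ℕ, (H (t + 1) (S (t + 1)) + K (t + 1)) * f t ((n : ℤ) - 1)) fun y hy => ?_
  rw [hHrec t hlast y, tsum_shift_eq_of_forall_lt hθ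
    (fun x hx => by rw [hV (t + 1) (by omega) x, if_pos hx]) (by linarith : y + θ < s (t + 1))]

theorem stmt10
    (T : ℕ) (hT : 2 ≤ T)
    (α : ℝ) (hα0 : 0 < α) (hα1 : α ≤ 1)
    (K : ℕ → ℝ) (hK0 : ∀ t, t < T → 0 ≤ K t)
    (hKmono : ∀ t, t + 2 ≤ T → α * K (t + 1) ≤ K t)
    (ν : ℕ → MeasureTheory.Measure ℝ)
    (hprob : ∀ t, MeasureTheory.IsProbabilityMeasure (ν t))
    (hpos : ∀ t, ν t (Set.Iio 0) = 0)
    (F : ℕ → ℝ → ℝ) (hF : ∀ t x, F t x = (ν t (Set.Iic x)).toReal)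
    (C : ℕ → ℝ → ℝ)
    (hCconv : ∀ t, t < T → ConvexOn ℝ Set.univ (C t))
    (hCcoer : ∀ t, t < T → Filter.Tendsto (C t) (Filter.cocompact ℝ) Filter.atTop)
    (θ : ℝ) (hθ : 0 < θ)
    (f : ℕ → ℤ → ℝ)
    (hf : ∀ t (n : ℤ), f t n = F t (((n : ℝ) + 1) * θ) - F t ((n : ℝ) * θ))
    (Cm SU : ℕ → ℝ)
    (hCm : ∀ t, t < T → IsLeast {x | ∀ y, C t x ≤ C t y} (Cm t))
    (hSU : ∀ t, t < T → ∀ n0 : ℤ, (n0 : ℝ) * θ < Cm t → Cm t ≤ ((n0 : ℝ) + 1) * θ →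
      IsLeast {w | (∃ m : ℤ, w = (m : ℝ) * θ) ∧ Cm t ≤ w ∧ C t ((n0 : ℝ) * θ) + K t < C t w} (SU t))
    (s S : ℕ → ℝ) (I Ibar : ℕ → ℝ)
    (hsT1a : s (T - 1) ≤ Cm (T - 1))
    (hsT1b : C (T - 1) (s (T - 1)) = C (T - 1) (Cm (T - 1)) + K (T - 1))
    (hIbarT1 : Ibar (T - 1) = s (T - 1))
    (hI : ∀ t, t + 2 ≤ T →
      IsGreatest {w | (∃ m : ℤ, w = (m : ℝ) * θ) ∧ w < min (Ibar (t + 1) - θ) (Cm t)} (I t))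
    (hIbar : ∀ t, t + 2 ≤ T →
      IsGreatest {w | (∃ m : ℤ, w = (m : ℝ) * θ) ∧ w ≤ I t ∧ C t (I t) + K t < C t w} (Ibar t - θ))
    (H V : ℕ → ℝ → ℝ)
    (hHT1 : ∀ y, H (T - 1) y = C (T - 1) y)
    (hST1 : S (T - 1) = Cm (T - 1))
    (hV : ∀ t, t < T → ∀ y, V t y = if y < s t then H t (S t) + K t else H t y)
    (hHrec : ∀ t, t + 2 ≤ T → ∀ y,
      H t y = C t y + α * ∑' n : ℕ, V (t + 1) (y - ((n : ℝ) - 1) * θ) * f t ((n : ℤ) - 1))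
    (hSdef : ∀ t, t + 2 ≤ T →
      IsGreatest {w | (∃ m : ℤ, w = (m : ℝ) * θ) ∧ I t ≤ w ∧ w ≤ SU t ∧
        ∀ u, (∃ n : ℤ, u = (n : ℝ) * θ) → I t ≤ u → u ≤ SU t → H t w ≤ H t u} (S t))
    (hsdef0 : ∀ t, t + 2 ≤ T → K t = 0 → s t = S t)
    (hsdef1 : ∀ t, t + 2 ≤ T → 0 < K t →
      IsLeast {w | (∃ m : ℤ, w = (m : ℝ) * θ) ∧ Ibar t ≤ w ∧ w ≤ S t ∧ H t w ≤ H t (S t) + K t} (s t))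
    :
    ∀ t, t < T → H t (S t) + K t ≤ H t (s t - θ) :=
  stmt10_general T α K hK0 C hCconv θ hθ f Cm SU hCm s S I Ibar hsT1a hsT1b hIbarT1 hI hIbar H V
    hHT1 hST1 hV hHrec hSdef hsdef0 hsdef1
end

section
/- For every t = 0,…,T−1 and all x' ≤ x, one has H_t(x') − H_t(x) ≤ ψ̄_t(x − x', x) and V_t(x') − V_t(x) ≤ φ̄_t(x − x', x). -/
open MeasureTheory Filter Set

theorem stmt11
    (T : ℕ) (hT : 2 ≤ T)
    (α : ℝ) (hα0 : 0 < α) (hα1 : α ≤ 1)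
    (K : ℕ → ℝ) (hK0 : ∀ t, t < T → 0 ≤ K t)
    (hKmono : ∀ t, t + 2 ≤ T → α * K (t + 1) ≤ K t)
    (ν : ℕ → MeasureTheory.Measure ℝ)
    (hprob : ∀ t, MeasureTheory.IsProbabilityMeasure (ν t))
    (hpos : ∀ t, ν t (Set.Iio 0) = 0)
    (F : ℕ → ℝ → ℝ) (hF : ∀ t x, F t x = (ν t (Set.Iic x)).toReal)
    (C : ℕ → ℝ → ℝ)
    (hCconv : ∀ t, t < T → ConvexOn ℝ Set.univ (C t))
    (hCcoer : ∀ t, t < T → Filter.Tendsto (C t) (Filter.cocompact ℝ) Filter.atTop)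
    (θ : ℝ) (hθ : 0 < θ)
    (f : ℕ → ℤ → ℝ)
    (hf : ∀ t (n : ℤ), f t n = F t (((n : ℝ) + 1) * θ) - F t ((n : ℝ) * θ))
    (Cm SU : ℕ → ℝ)
    (hCm : ∀ t, t < T → IsLeast {x | ∀ y, C t x ≤ C t y} (Cm t))
    (hSU : ∀ t, t < T → ∀ n0 : ℤ, (n0 : ℝ) * θ < Cm t → Cm t ≤ ((n0 : ℝ) + 1) * θ →
      IsLeast {w | (∃ m : ℤ, w = (m : ℝ) * θ) ∧ Cm t ≤ w ∧ C t ((n0 : ℝ) * θ) + K t < C t w} (SU t))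
    (s S : ℕ → ℝ) (I Ibar : ℕ → ℝ)
    (hsT1a : s (T - 1) ≤ Cm (T - 1))
    (hsT1b : C (T - 1) (s (T - 1)) = C (T - 1) (Cm (T - 1)) + K (T - 1))
    (hIbarT1 : Ibar (T - 1) = s (T - 1))
    (hI : ∀ t, t + 2 ≤ T →
      IsGreatest {w | (∃ m : ℤ, w = (m : ℝ) * θ) ∧ w < min (Ibar (t + 1) - θ) (Cm t)} (I t))
    (hIbar : ∀ t, t + 2 ≤ T →
      IsGreatest {w | (∃ m : ℤ, w = (m : ℝ) * θ) ∧ w ≤ I t ∧ C t (I t) + K t < C t w} (Ibar t - θ))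
    (H V : ℕ → ℝ → ℝ)
    (hHT1 : ∀ y, H (T - 1) y = C (T - 1) y)
    (hST1 : S (T - 1) = Cm (T - 1))
    (hV : ∀ t, t < T → ∀ y, V t y = if y < s t then H t (S t) + K t else H t y)
    (hHrec : ∀ t, t + 2 ≤ T → ∀ y,
      H t y = C t y + α * ∑' n : ℕ, V (t + 1) (y - ((n : ℝ) - 1) * θ) * f t ((n : ℤ) - 1))
    (hSdef : ∀ t, t + 2 ≤ T →
      IsGreatest {w | (∃ m : ℤ, w = (m : ℝ) * θ) ∧ I t ≤ w ∧ w ≤ SU t ∧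
        ∀ u, (∃ n : ℤ, u = (n : ℝ) * θ) → I t ≤ u → u ≤ SU t → H t w ≤ H t u} (S t))
    (hsdef0 : ∀ t, t + 2 ≤ T → K t = 0 → s t = S t)
    (hsdef1 : ∀ t, t + 2 ≤ T → 0 < K t →
      IsLeast {w | (∃ m : ℤ, w = (m : ℝ) * θ) ∧ Ibar t ≤ w ∧ w ≤ S t ∧ H t w ≤ H t (S t) + K t} (s t))
    (γ : ℕ → ℝ) (hγ : ∀ t, t < T → 0 ≤ γ t)
    (hLip : ∀ t, t < T → ∀ x y, |C t x - C t y| ≤ γ t * |x - y|)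
    (psib phib : ℕ → ℝ → ℝ → ℝ)
    (hpsibT1 : ∀ x y : ℝ, psib (T - 1) x y = γ (T - 1) * x)
    (hphibT1 : ∀ x y : ℝ, phib (T - 1) x y = if y < s (T - 1) then 0 else γ (T - 1) * x)
    (hpsibA : ∀ t, t + 2 ≤ T → ∀ x y : ℝ, y < s (t + 1) - θ → psib t x y = γ t * x)
    (hpsibB : ∀ t, t + 2 ≤ T → ∀ x y : ℝ, s (t + 1) - θ ≤ y → ∀ n : ℤ,
      ((n : ℝ) - 1) * θ ≤ y - s (t + 1) → y - s (t + 1) < (n : ℝ) * θ →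
      psib t x y = γ t * x
        + α * ∑ j ∈ Finset.Icc (-1 : ℤ) (n - 1), phib (t + 1) x (y - (j : ℝ) * θ) * f t j)
    (hphib : ∀ t, t + 2 ≤ T → ∀ x y : ℝ, phib t x y =
      if y < s t then 0 else if y - x < s t then psib t (y - s t + θ) y else psib t x y)
    :
    ∀ t, t < T → ∀ x' x : ℝ, x' ≤ x →
      H t x' - H t x ≤ psib t (x - x') x ∧ V t x' - V t x ≤ phib t (x - x') x := by
  -- Lipschitz-type one-sided bound
  have hLip' : ∀ u, u < T → ∀ a b : ℝ, a ≤ b → C u a - C u b ≤ γ u * (b - a) := by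
    intro u hu a b hab
    have h1 := hLip u hu a b
    have h2 : |a - b| = b - a := by rw [abs_of_nonpos (by linarith)]; ring
    rw [h2] at h1
    calc C u a - C u b ≤ |C u a - C u b| := le_abs_self _
      _ ≤ γ u * (b - a) := h1
  -- F monotone, bounded
  have hFmono : ∀ u (a b : ℝ), a ≤ b → F u a ≤ F u b := by
    intro u a b hab
    have := hprob u
    rw [hF, hF]
    exact ENNReal.toReal_mono (measure_ne_top _ _) (measure_mono (Set.Iic_subset_Iic.mpr hab))
  have hF0 : ∀ u (x : ℝ), 0 ≤ F u x := by
    intro u x; rw [hF]; exact ENNReal.toReal_nonneg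
  have hF1 : ∀ u (x : ℝ), F u x ≤ 1 := by
    intro u x
    have := hprob u
    rw [hF]
    have h1 : ν u (Set.Iic x) ≤ 1 := prob_le_one
    calc (ν u (Set.Iic x)).toReal ≤ (1 : ENNReal).toReal :=
          ENNReal.toReal_mono (by simp) h1
      _ = 1 := by simp
  have hfnn : ∀ u (j : ℤ), 0 ≤ f u j := by
    intro u j
    rw [hf]
    have := hFmono u ((j : ℝ) * θ) (((j : ℝ) + 1) * θ) (by nlinarith)
    linarith
  -- summability of the tail weights
  have hsumf : ∀ u, Summable (fun n : ℕ => f u ((n : ℤ) - 1)) := by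
    intro u
    apply summable_of_sum_range_le (c := 1) (fun n => hfnn u _)
    intro N
    have hterm : ∀ n : ℕ, f u ((n : ℤ) - 1)
        = F u ((((n + 1 : ℕ) : ℝ) - 1) * θ) - F u (((n : ℝ) - 1) * θ) := by
      intro n
      rw [hf]
      push_cast
      ring_nf
    calc ∑ n ∈ Finset.range N, f u ((n : ℤ) - 1)
        = ∑ n ∈ Finset.range N,
            (F u ((((n + 1 : ℕ) : ℝ) - 1) * θ) - F u (((n : ℝ) - 1) * θ)) :=
          Finset.sum_congr rfl (fun n _ => hterm n)
      _ = F u (((N : ℝ) - 1) * θ) - F u ((((0 : ℕ) : ℝ) - 1) * θ) := by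
          exact Finset.sum_range_sub (fun k : ℕ => F u (((k : ℝ) - 1) * θ)) N
      _ ≤ 1 := by
          have := hF1 u (((N : ℝ) - 1) * θ)
          have := hF0 u ((((0 : ℕ) : ℝ) - 1) * θ)
          linarith
  -- lattice separation
  have lat : ∀ a b : ℝ, (∃ m : ℤ, a = (m : ℝ) * θ) → (∃ m : ℤ, b = (m : ℝ) * θ) →
      a < b → a + θ ≤ b := by
    rintro a b ⟨m, rfl⟩ ⟨k, rfl⟩ hab
    have hmk : m < k := by
      by_contra hc
      push_neg at hc
      have : (k : ℝ) ≤ (m : ℝ) := by exact_mod_cast hc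
      nlinarith
    have : (m : ℝ) + 1 ≤ (k : ℝ) := by exact_mod_cast hmk
    nlinarith
  -- convex functions decrease left of minimizer
  have hCdec : ∀ u, u < T → ∀ a b : ℝ, a ≤ b → b ≤ Cm u → C u b ≤ C u a := by
    intro u hu a b hab hbm
    have hmin : ∀ y, C u (Cm u) ≤ C u y := (hCm u hu).1
    by_cases hac : a < Cm u
    · have hd : 0 < Cm u - a := by linarith
      set l : ℝ := (Cm u - b) / (Cm u - a) with hl
      have hl0 : 0 ≤ l := by
        apply div_nonneg _ hd.le; linarith
      have hl1 : 0 ≤ 1 - l := by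
        rw [hl]
        rw [sub_nonneg, div_le_one hd]
        linarith
      have hcomb : l • a + (1 - l) • Cm u = b := by
        simp only [smul_eq_mul, hl]
        field_simp
        ring
      have hcv := (hCconv u hu).2 (Set.mem_univ a) (Set.mem_univ (Cm u)) hl0 hl1 (by ring)
      rw [hcomb] at hcv
      have h2 : C u (Cm u) ≤ C u a := hmin a
      have h3 : (1 - l) * C u (Cm u) ≤ (1 - l) * C u a :=
        mul_le_mul_of_nonneg_left h2 hl1
      simp only [smul_eq_mul] at hcv
      nlinarith
    · push_neg at hac
      have : a = Cm u := le_antisymm (hab.trans hbm) hac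
      have hb : b = Cm u := le_antisymm hbm (this ▸ hab)
      rw [this, hb]
  -- phi-bar monotone in x, given psi-bar monotone at the same level
  have phib_mono : ∀ u, u < T →
      (∀ x₁ x₂ y : ℝ, x₁ ≤ x₂ → psib u x₁ y ≤ psib u x₂ y) →
      ∀ x₁ x₂ y : ℝ, x₁ ≤ x₂ → phib u x₁ y ≤ phib u x₂ y := by
    intro u hu hps x₁ x₂ y h12
    by_cases h2 : u + 2 ≤ T
    · rw [hphib u h2 x₁ y, hphib u h2 x₂ y]
      by_cases hys : y < s u
      · rw [if_pos hys, if_pos hys]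
      · rw [if_neg hys, if_neg hys]
        by_cases hc1 : y - x₁ < s u
        · rw [if_pos hc1, if_pos (by linarith : y - x₂ < s u)]
        · rw [if_neg hc1]
          by_cases hc2 : y - x₂ < s u
          · rw [if_pos hc2]
            push_neg at hc1
            exact hps _ _ _ (by linarith)
          · rw [if_neg hc2]
            exact hps _ _ _ h12
    · have hu1 : u = T - 1 := by omega
      rw [hu1, hphibT1, hphibT1]
      by_cases hys : y < s (T - 1)
      · rw [if_pos hys, if_pos hys]
      · rw [if_neg hys, if_neg hys]
        exact mul_le_mul_of_nonneg_left h12 (hγ (T - 1) (by omega))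
  -- floor fact
  have floor_fact : ∀ a : ℝ, -θ ≤ a →
      ∃ n : ℤ, 0 ≤ n ∧ ((n : ℝ) - 1) * θ ≤ a ∧ a < (n : ℝ) * θ := by
    intro a ha
    refine ⟨⌊a / θ⌋ + 1, ?_, ?_, ?_⟩
    · have h1 : (-1 : ℤ) ≤ ⌊a / θ⌋ := by
        apply Int.le_floor.mpr
        rw [Int.cast_neg, Int.cast_one, le_div_iff₀ hθ]
        linarith
      omega
    · have h1 : ((⌊a / θ⌋ : ℝ)) ≤ a / θ := Int.floor_le _
      have h2 := mul_le_mul_of_nonneg_right h1 hθ.le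
      rw [div_mul_cancel₀ _ hθ.ne'] at h2
      push_cast
      linarith
    · have h1 : a / θ < (⌊a / θ⌋ : ℝ) + 1 := Int.lt_floor_add_one _
      have h2 := (div_lt_iff₀ hθ).mp h1
      push_cast
      nlinarith
  -- reindexing sums
  have reind : ∀ (G : ℤ → ℝ) (M : ℕ),
      ∑ k ∈ Finset.range M, G ((k : ℤ) - 1)
        = ∑ j ∈ Finset.Icc (-1 : ℤ) ((M : ℤ) - 2), G j := by
    intro G M
    induction M with
    | zero =>
      have he : ¬(-1 : ℤ) ≤ ((0 : ℕ) : ℤ) - 2 := by norm_num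
      rw [Finset.range_zero, Finset.sum_empty, Finset.Icc_eq_empty he, Finset.sum_empty]
    | succ M ihM =>
      rw [Finset.sum_range_succ, ihM]
      have h1 : ((M + 1 : ℕ) : ℤ) - 2 = ((M : ℤ) - 2) + 1 := by push_cast; ring
      have h2 : Finset.Icc (-1 : ℤ) (((M : ℤ) - 2) + 1)
          = insert (((M : ℤ) - 2) + 1) (Finset.Icc (-1 : ℤ) ((M : ℤ) - 2)) := by
        ext j
        simp only [Finset.mem_Icc, Finset.mem_insert]
        omega
      have h3 : (((M : ℤ) - 2) + 1) ∉ Finset.Icc (-1 : ℤ) ((M : ℤ) - 2) := by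
        simp only [Finset.mem_Icc]
        omega
      rw [h1, h2, Finset.sum_insert h3]
      have h4 : ((M : ℤ) - 2) + 1 = (M : ℤ) - 1 := by ring
      rw [h4]
      ring
  -- main downward induction
  suffices key : ∀ d t, t < T → T = t + 1 + d →
      ((∀ x' x : ℝ, x' ≤ x → H t x' - H t x ≤ psib t (x - x') x ∧
          V t x' - V t x ≤ phib t (x - x') x)
        ∧ ∀ x₁ x₂ y : ℝ, x₁ ≤ x₂ → psib t x₁ y ≤ psib t x₂ y) by
    intro t ht
    exact (key (T - (t + 1)) t ht (by omega)).1
  intro d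
  induction d with
  | zero =>
    intro t ht hTt
    have e : t = T - 1 := by omega
    subst e
    constructor
    · intro x' x hxx
      constructor
      · rw [hHT1 x', hHT1 x, hpsibT1]
        exact hLip' (T - 1) ht x' x hxx
      · rw [hV (T - 1) ht x', hV (T - 1) ht x, hphibT1]
        by_cases hx : x < s (T - 1)
        · rw [if_pos hx, if_pos (lt_of_le_of_lt hxx hx), if_pos hx]
          simp
        · rw [if_neg hx, if_neg hx]
          by_cases hx' : x' < s (T - 1)
          · rw [if_pos hx', hHT1, hHT1, hST1]
            have h1 : C (T - 1) (s (T - 1)) - C (T - 1) x ≤ γ (T - 1) * (x - s (T - 1)) :=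
              hLip' (T - 1) ht _ _ (le_of_not_gt hx)
            have h2 : γ (T - 1) * (x - s (T - 1)) ≤ γ (T - 1) * (x - x') :=
              mul_le_mul_of_nonneg_left (by linarith) (hγ (T - 1) ht)
            linarith [hsT1b]
          · rw [if_neg hx', hHT1 x', hHT1 x]
            exact hLip' (T - 1) ht x' x hxx
    · intro x₁ x₂ y h12
      rw [hpsibT1, hpsibT1]
      exact mul_le_mul_of_nonneg_left h12 (hγ (T - 1) ht)
  | succ d ih =>
    intro t ht hTt
    have ht2 : t + 2 ≤ T := by omega
    have ht1T : t + 1 < T := by omega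
    have IH := ih (t + 1) ht1T (by omega)
    have hVconst : ∀ y : ℝ, y < s (t + 1) → V (t + 1) y = H (t + 1) (S (t + 1)) + K (t + 1) := by
      intro y hy
      rw [hV (t + 1) ht1T y, if_pos hy]
    have harg : ∀ (y : ℝ) (k : ℕ), y - ((k : ℝ) - 1) * θ ≤ y + θ := by
      intro y k
      have h0 : (0 : ℝ) ≤ (k : ℝ) * θ := mul_nonneg (Nat.cast_nonneg k) hθ.le
      nlinarith
    -- H difference bound
    have Hdiff : ∀ x' x : ℝ, x' ≤ x → H t x' - H t x ≤ psib t (x - x') x := by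
      intro x' x hxx
      by_cases hcase : x < s (t + 1) - θ
      · have e1 : (∑' k : ℕ, V (t + 1) (x' - ((k : ℝ) - 1) * θ) * f t ((k : ℤ) - 1))
            = ∑' k : ℕ, (H (t + 1) (S (t + 1)) + K (t + 1)) * f t ((k : ℤ) - 1) :=
          tsum_congr fun k => by
            rw [hVconst _ (by have := harg x' k; linarith)]
        have e2 : (∑' k : ℕ, V (t + 1) (x - ((k : ℝ) - 1) * θ) * f t ((k : ℤ) - 1))
            = ∑' k : ℕ, (H (t + 1) (S (t + 1)) + K (t + 1)) * f t ((k : ℤ) - 1) :=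
          tsum_congr fun k => by
            rw [hVconst _ (by have := harg x k; linarith)]
        rw [hHrec t ht2 x', hHrec t ht2 x, hpsibA t ht2 (x - x') x hcase, e1, e2]
        have := hLip' t (by omega) x' x hxx
        linarith
      · push_neg at hcase
        obtain ⟨n, hn0, hn1, hn2⟩ := floor_fact (x - s (t + 1)) (by linarith)
        set N : ℕ := n.toNat + 1 with hN
        have hNn : (N : ℤ) = n + 1 := by
          rw [hN]
          push_cast [Int.toNat_of_nonneg hn0]
          ring
        have htail : ∀ y : ℝ, y ≤ x → ∀ k : ℕ, k ∉ Finset.range N →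
            V (t + 1) (y - ((k : ℝ) - 1) * θ) = H (t + 1) (S (t + 1)) + K (t + 1) := by
          intro y hy k hk
          have hk' : N ≤ k := by simpa [Finset.mem_range, not_lt] using hk
          apply hVconst
          have hk2 : (N : ℤ) ≤ (k : ℤ) := by exact_mod_cast hk'
          have hk3 : n + 1 ≤ (k : ℤ) := by omega
          have hk4 : (n : ℝ) + 1 ≤ (k : ℝ) := by exact_mod_cast hk3
          have h5 : (n : ℝ) * θ ≤ ((k : ℝ) - 1) * θ :=
            mul_le_mul_of_nonneg_right (by linarith) hθ.le
          linarith
        have hsummable : ∀ y : ℝ, y ≤ x →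
            Summable (fun k : ℕ => V (t + 1) (y - ((k : ℝ) - 1) * θ) * f t ((k : ℤ) - 1)) := by
          intro y hy
          have h1 : Summable (fun k : ℕ => (H (t + 1) (S (t + 1)) + K (t + 1)) * f t ((k : ℤ) - 1)) :=
            (hsumf t).mul_left _
          have h2 : Summable (fun k : ℕ =>
              V (t + 1) (y - ((k : ℝ) - 1) * θ) * f t ((k : ℤ) - 1)
                - (H (t + 1) (S (t + 1)) + K (t + 1)) * f t ((k : ℤ) - 1)) := by
            apply summable_of_ne_finset_zero (s := Finset.range N)
            intro k hk
            rw [htail y hy k hk]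
            ring
          exact (h2.add h1).congr (fun k => by ring)
        have hsplit : (∑' k : ℕ, V (t + 1) (x' - ((k : ℝ) - 1) * θ) * f t ((k : ℤ) - 1))
            - (∑' k : ℕ, V (t + 1) (x - ((k : ℝ) - 1) * θ) * f t ((k : ℤ) - 1))
            = ∑ k ∈ Finset.range N,
                (V (t + 1) (x' - ((k : ℝ) - 1) * θ) * f t ((k : ℤ) - 1)
                  - V (t + 1) (x - ((k : ℝ) - 1) * θ) * f t ((k : ℤ) - 1)) := by
          rw [← Summable.tsum_sub (hsummable x' hxx) (hsummable x le_rfl)]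
          exact tsum_eq_sum (fun k hk => by
            rw [htail x' hxx k hk, htail x le_rfl k hk]; ring)
        have hbound : ∑ k ∈ Finset.range N,
              (V (t + 1) (x' - ((k : ℝ) - 1) * θ) * f t ((k : ℤ) - 1)
                - V (t + 1) (x - ((k : ℝ) - 1) * θ) * f t ((k : ℤ) - 1))
            ≤ ∑ k ∈ Finset.range N,
                phib (t + 1) (x - x') (x - ((k : ℝ) - 1) * θ) * f t ((k : ℤ) - 1) := by
          apply Finset.sum_le_sum
          intro k _
          have h1 := (IH.1 (x' - ((k : ℝ) - 1) * θ) (x - ((k : ℝ) - 1) * θ) (by linarith)).2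
          have h2 : x - ((k : ℝ) - 1) * θ - (x' - ((k : ℝ) - 1) * θ) = x - x' := by ring
          rw [h2] at h1
          have h3 := mul_le_mul_of_nonneg_right h1 (hfnn t ((k : ℤ) - 1))
          calc V (t + 1) (x' - ((k : ℝ) - 1) * θ) * f t ((k : ℤ) - 1)
                - V (t + 1) (x - ((k : ℝ) - 1) * θ) * f t ((k : ℤ) - 1)
              = (V (t + 1) (x' - ((k : ℝ) - 1) * θ)
                  - V (t + 1) (x - ((k : ℝ) - 1) * θ)) * f t ((k : ℤ) - 1) := by ring
            _ ≤ _ := h3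
        have hsum_eq : ∑ k ∈ Finset.range N,
              phib (t + 1) (x - x') (x - ((k : ℝ) - 1) * θ) * f t ((k : ℤ) - 1)
            = ∑ j ∈ Finset.Icc (-1 : ℤ) (n - 1),
                phib (t + 1) (x - x') (x - (j : ℝ) * θ) * f t j := by
          have hr := reind (fun j : ℤ => phib (t + 1) (x - x') (x - (j : ℝ) * θ) * f t j) N
          rw [show ((N : ℤ) - 2) = n - 1 by omega] at hr
          rw [← hr]
          apply Finset.sum_congr rfl
          intro k _
          push_cast
          ring_nf
        rw [hHrec t ht2 x', hHrec t ht2 x, hpsibB t ht2 (x - x') x hcase n hn1 hn2]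
        have hC := hLip' t (by omega) x' x hxx
        have hmul : α * ((∑' k : ℕ, V (t + 1) (x' - ((k : ℝ) - 1) * θ) * f t ((k : ℤ) - 1))
            - (∑' k : ℕ, V (t + 1) (x - ((k : ℝ) - 1) * θ) * f t ((k : ℤ) - 1)))
            ≤ α * ∑ j ∈ Finset.Icc (-1 : ℤ) (n - 1),
                phib (t + 1) (x - x') (x - (j : ℝ) * θ) * f t j := by
          apply mul_le_mul_of_nonneg_left _ hα0.le
          rw [hsplit]
          exact hbound.trans (le_of_eq hsum_eq)
        rw [mul_sub] at hmul
        linarith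
    -- facts about I, Ibar, S, s at level t
    have hIlt : I t < min (Ibar (t + 1) - θ) (Cm t) := (hI t ht2).1.2
    obtain ⟨mI, hmI⟩ := (hI t ht2).1.1
    obtain ⟨⟨⟨mS, hmS⟩, hIS, hSSU, hSmin⟩, -⟩ := hSdef t ht2
    obtain ⟨⟨⟨mIb, hmIb⟩, hIbI, hCIb⟩, -⟩ := hIbar t ht2
    have hIbarle : Ibar (t + 1) ≤ s (t + 1) := by
      by_cases h3 : t + 3 ≤ T
      · rcases lt_or_eq_of_le (hK0 (t + 1) ht1T) with hKpos | hKz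
        · exact ((hsdef1 (t + 1) h3 hKpos).1).2.1
        · have hs1 : s (t + 1) = S (t + 1) := hsdef0 (t + 1) h3 hKz.symm
          obtain ⟨⟨⟨mIb', hmIb'⟩, hIbI', hCIb'⟩, -⟩ := hIbar (t + 1) h3
          obtain ⟨⟨⟨mS', hmS'⟩, hIS', hSSU', -⟩, -⟩ := hSdef (t + 1) h3
          obtain ⟨⟨⟨mI', hmI'⟩, -⟩, -⟩ := hI (t + 1) h3
          have hne : Ibar (t + 1) - θ ≠ I (t + 1) := by
            intro hcontr
            rw [hcontr] at hCIb'
            rw [← hKz] at hCIb'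
            linarith
          have hlt : Ibar (t + 1) - θ < I (t + 1) := lt_of_le_of_ne hIbI' hne
          have := lat _ _ ⟨mIb', hmIb'⟩ ⟨mI', hmI'⟩ hlt
          rw [hs1]
          linarith
      · have he : t + 1 = T - 1 := by omega
        rw [he, hIbarT1]
    have Hlow : ∀ y : ℝ, y ≤ I t →
        H t y = C t y + α * ∑' k : ℕ, (H (t + 1) (S (t + 1)) + K (t + 1)) * f t ((k : ℤ) - 1) := by
      intro y hy
      rw [hHrec t ht2 y]
      have e : (∑' k : ℕ, V (t + 1) (y - ((k : ℝ) - 1) * θ) * f t ((k : ℤ) - 1))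
          = ∑' k : ℕ, (H (t + 1) (S (t + 1)) + K (t + 1)) * f t ((k : ℤ) - 1) :=
        tsum_congr fun k => by
          rw [hVconst]
          have h1 := harg y k
          have h2 := (lt_min_iff.mp hIlt).1
          linarith
      rw [e]
    -- the key inequality H (S t) + K t ≤ H (s t - θ)
    have HsK : H t (S t) + K t ≤ H t (s t - θ) := by
      rcases lt_or_eq_of_le (hK0 t (by omega)) with hKpos | hKz
      · obtain ⟨⟨⟨ms, hms⟩, hIbs, hsS, hHs⟩, hsmin⟩ := hsdef1 t ht2 hKpos
        by_cases hcase : Ibar t ≤ s t - θ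
        · by_contra hcon
          push_neg at hcon
          have hmem : s t - θ ∈ {w | (∃ m : ℤ, w = (m : ℝ) * θ) ∧ Ibar t ≤ w ∧ w ≤ S t ∧
              H t w ≤ H t (S t) + K t} :=
            ⟨⟨ms - 1, by rw [hms]; push_cast; ring⟩, hcase, by linarith, hcon.le⟩
          have := hsmin hmem
          linarith
        · push_neg at hcase
          have hIbar_lat : ∃ m : ℤ, Ibar t = (m : ℝ) * θ :=
            ⟨mIb + 1, by push_cast; linarith [hmIb]⟩
          have hseq : s t = Ibar t := by
            rcases eq_or_lt_of_le hIbs with h | h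
            · exact h.symm
            · have := lat (Ibar t) (s t) hIbar_lat ⟨ms, hms⟩ h
              linarith
          have hHSI : H t (S t) ≤ H t (I t) :=
            hSmin (I t) ⟨mI, hmI⟩ le_rfl (hIS.trans hSSU)
          have e1 := Hlow (I t) le_rfl
          have e2 := Hlow (Ibar t - θ) hIbI
          rw [hseq]
          linarith
      · have hs1 : s t = S t := hsdef0 t ht2 hKz.symm
        rw [hs1, ← hKz, add_zero]
        by_cases hcase : I t ≤ S t - θ
        · exact hSmin (S t - θ) ⟨mS - 1, by rw [hmS]; push_cast; ring⟩ hcase (by linarith)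
        · push_neg at hcase
          have hSeqI : S t = I t := by
            rcases eq_or_lt_of_le hIS with h | h
            · exact h.symm
            · have := lat _ _ ⟨mI, hmI⟩ ⟨mS, hmS⟩ h
              linarith
          rw [hSeqI]
          have e1 := Hlow (I t) le_rfl
          have e2 := Hlow (I t - θ) (by linarith)
          have hICm : I t ≤ Cm t := (lt_min_iff.mp hIlt).2.le
          have hCle : C t (I t) ≤ C t (I t - θ) :=
            hCdec t (by omega) (I t - θ) (I t) (by linarith) hICm
          rw [e1, e2]
          linarith
    -- V difference bound
    have Vdiff : ∀ x' x : ℝ, x' ≤ x → V t x' - V t x ≤ phib t (x - x') x := by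
      intro x' x hxx
      rw [hV t (by omega) x', hV t (by omega) x, hphib t ht2 (x - x') x]
      have hxs : x - (x - x') = x' := by ring
      rw [hxs]
      by_cases hx : x < s t
      · rw [if_pos hx, if_pos (lt_of_le_of_lt hxx hx), if_pos hx]
        simp
      · rw [if_neg hx, if_neg hx]
        by_cases hx' : x' < s t
        · rw [if_pos hx', if_pos hx']
          have h1 := Hdiff (s t - θ) x (by linarith [le_of_not_gt hx])
          have h2 : x - (s t - θ) = x - s t + θ := by ring
          rw [h2] at h1
          linarith [HsK]
        · rw [if_neg hx', if_neg hx']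
          exact Hdiff x' x hxx
    -- psi-bar monotonicity at level t
    have psmono : ∀ x₁ x₂ y : ℝ, x₁ ≤ x₂ → psib t x₁ y ≤ psib t x₂ y := by
      intro x₁ x₂ y h12
      by_cases hcase : y < s (t + 1) - θ
      · rw [hpsibA t ht2 x₁ y hcase, hpsibA t ht2 x₂ y hcase]
        exact mul_le_mul_of_nonneg_left h12 (hγ t (by omega))
      · push_neg at hcase
        obtain ⟨n, hn0, hn1, hn2⟩ := floor_fact (y - s (t + 1)) (by linarith)
        rw [hpsibB t ht2 x₁ y hcase n hn1 hn2, hpsibB t ht2 x₂ y hcase n hn1 hn2]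
        have hsum : ∑ j ∈ Finset.Icc (-1 : ℤ) (n - 1), phib (t + 1) x₁ (y - (j : ℝ) * θ) * f t j
            ≤ ∑ j ∈ Finset.Icc (-1 : ℤ) (n - 1), phib (t + 1) x₂ (y - (j : ℝ) * θ) * f t j := by
          apply Finset.sum_le_sum
          intro j _
          exact mul_le_mul_of_nonneg_right
            (phib_mono (t + 1) ht1T IH.2 x₁ x₂ _ h12) (hfnn t j)
        have h1 := mul_le_mul_of_nonneg_left hsum hα0.le
        have h2 := mul_le_mul_of_nonneg_left h12 (hγ t (by omega))
        linarith
    exact ⟨fun x' x hxx => ⟨Hdiff x' x hxx, Vdiff x' x hxx⟩, psmono⟩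
end

section
/- For every t = 0,…,T−1, the functions ω_t and ω̄_t are increasing (nondecreasing) on ℝ. -/
open MeasureTheory Filter Set

theorem stmt12
    (T : ℕ) (hT : 2 ≤ T)
    (α : ℝ) (hα0 : 0 < α) (hα1 : α ≤ 1)
    (K : ℕ → ℝ) (hK0 : ∀ t, t < T → 0 ≤ K t)
    (hKmono : ∀ t, t + 2 ≤ T → α * K (t + 1) ≤ K t)
    (ν : ℕ → MeasureTheory.Measure ℝ)
    (hprob : ∀ t, MeasureTheory.IsProbabilityMeasure (ν t))
    (hpos : ∀ t, ν t (Set.Iio 0) = 0)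
    (F : ℕ → ℝ → ℝ) (hF : ∀ t x, F t x = (ν t (Set.Iic x)).toReal)
    (C : ℕ → ℝ → ℝ)
    (hCconv : ∀ t, t < T → ConvexOn ℝ Set.univ (C t))
    (hCcoer : ∀ t, t < T → Filter.Tendsto (C t) (Filter.cocompact ℝ) Filter.atTop)
    (θ : ℝ) (hθ : 0 < θ)
    (f : ℕ → ℤ → ℝ)
    (hf : ∀ t (n : ℤ), f t n = F t (((n : ℝ) + 1) * θ) - F t ((n : ℝ) * θ))
    (Cm SU : ℕ → ℝ)
    (hCm : ∀ t, t < T → IsLeast {x | ∀ y, C t x ≤ C t y} (Cm t))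
    (hSU : ∀ t, t < T → ∀ n0 : ℤ, (n0 : ℝ) * θ < Cm t → Cm t ≤ ((n0 : ℝ) + 1) * θ →
      IsLeast {w | (∃ m : ℤ, w = (m : ℝ) * θ) ∧ Cm t ≤ w ∧ C t ((n0 : ℝ) * θ) + K t < C t w} (SU t))
    (s S : ℕ → ℝ) (I Ibar : ℕ → ℝ)
    (hsT1a : s (T - 1) ≤ Cm (T - 1))
    (hsT1b : C (T - 1) (s (T - 1)) = C (T - 1) (Cm (T - 1)) + K (T - 1))
    (hIbarT1 : Ibar (T - 1) = s (T - 1))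
    (hI : ∀ t, t + 2 ≤ T →
      IsGreatest {w | (∃ m : ℤ, w = (m : ℝ) * θ) ∧ w < min (Ibar (t + 1) - θ) (Cm t)} (I t))
    (hIbar : ∀ t, t + 2 ≤ T →
      IsGreatest {w | (∃ m : ℤ, w = (m : ℝ) * θ) ∧ w ≤ I t ∧ C t (I t) + K t < C t w} (Ibar t - θ))
    (H V : ℕ → ℝ → ℝ)
    (hHT1 : ∀ y, H (T - 1) y = C (T - 1) y)
    (hST1 : S (T - 1) = Cm (T - 1))
    (hV : ∀ t, t < T → ∀ y, V t y = if y < s t then H t (S t) + K t else H t y)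
    (hHrec : ∀ t, t + 2 ≤ T → ∀ y,
      H t y = C t y + α * ∑' n : ℕ, V (t + 1) (y - ((n : ℝ) - 1) * θ) * f t ((n : ℤ) - 1))
    (hSdef : ∀ t, t + 2 ≤ T →
      IsGreatest {w | (∃ m : ℤ, w = (m : ℝ) * θ) ∧ I t ≤ w ∧ w ≤ SU t ∧
        ∀ u, (∃ n : ℤ, u = (n : ℝ) * θ) → I t ≤ u → u ≤ SU t → H t w ≤ H t u} (S t))
    (hsdef0 : ∀ t, t + 2 ≤ T → K t = 0 → s t = S t)
    (hsdef1 : ∀ t, t + 2 ≤ T → 0 < K t →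
      IsLeast {w | (∃ m : ℤ, w = (m : ℝ) * θ) ∧ Ibar t ≤ w ∧ w ≤ S t ∧ H t w ≤ H t (S t) + K t} (s t))
    (γ : ℕ → ℝ) (hγ : ∀ t, t < T → 0 ≤ γ t)
    (hLip : ∀ t, t < T → ∀ x y, |C t x - C t y| ≤ γ t * |x - y|)
    (psi phi : ℕ → ℝ → ℝ → ℝ)
    (hpsiT1 : ∀ x y : ℝ, psi (T - 1) x y = γ (T - 1) * x)
    (hphiT1 : ∀ x y : ℝ, phi (T - 1) x y = if y < s (T - 1) then 0 else γ (T - 1) * x)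
    (hpsiA : ∀ t, t + 2 ≤ T → ∀ x y : ℝ, y < s (t + 1) - θ → psi t x y = γ t * x)
    (hpsiB : ∀ t, t + 2 ≤ T → ∀ x y : ℝ, s (t + 1) - θ ≤ y → ∀ n : ℤ,
      ((n : ℝ) - 1) * θ ≤ y - s (t + 1) → y - s (t + 1) < (n : ℝ) * θ →
      psi t x y = γ t * x
        + α * ∑ j ∈ Finset.Icc (-1 : ℤ) (n - 1), phi (t + 1) x (y - (j : ℝ) * θ) * f t j)
    (hphi : ∀ t, t + 2 ≤ T → ∀ x y : ℝ, phi t x y =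
      if y < s t then 0 else if y - x < s t then psi t (y - s t) y else psi t x y)
    (psib phib : ℕ → ℝ → ℝ → ℝ)
    (hpsibT1 : ∀ x y : ℝ, psib (T - 1) x y = γ (T - 1) * x)
    (hphibT1 : ∀ x y : ℝ, phib (T - 1) x y = if y < s (T - 1) then 0 else γ (T - 1) * x)
    (hpsibA : ∀ t, t + 2 ≤ T → ∀ x y : ℝ, y < s (t + 1) - θ → psib t x y = γ t * x)
    (hpsibB : ∀ t, t + 2 ≤ T → ∀ x y : ℝ, s (t + 1) - θ ≤ y → ∀ n : ℤ,
      ((n : ℝ) - 1) * θ ≤ y - s (t + 1) → y - s (t + 1) < (n : ℝ) * θ →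
      psib t x y = γ t * x
        + α * ∑ j ∈ Finset.Icc (-1 : ℤ) (n - 1), phib (t + 1) x (y - (j : ℝ) * θ) * f t j)
    (hphib : ∀ t, t + 2 ≤ T → ∀ x y : ℝ, phib t x y =
      if y < s t then 0 else if y - x < s t then psib t (y - s t + θ) y else psib t x y)
    (om omb : ℕ → ℝ → ℝ) (eta : ℕ → ℝ)
    (homT1 : ∀ x, om (T - 1) x = 0) (hombT1 : ∀ x, omb (T - 1) x = 0) (hetaT1 : eta (T - 1) = 0)
    (hom : ∀ t, t + 2 ≤ T → ∀ x, om t x =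
      psi t θ x - γ t * θ + α * ∑' n : ℕ, omb (t + 1) (x - ((n : ℝ) - 1) * θ) * f t ((n : ℤ) - 1))
    (heta : ∀ t, t + 2 ≤ T → eta t = psib t θ (SU t) + om t (SU t))
    (homb : ∀ t, t + 2 ≤ T → ∀ x, omb t x = if x ≤ SU t then eta t else max (eta t) (om t x))
    :
    ∀ t, t < T → Monotone (om t) ∧ Monotone (omb t) := by
  -- Basic facts about F and f
  have Fmono : ∀ t : ℕ, Monotone (F t) := by
    intro t a b hab
    haveI := hprob t
    rw [hF, hF]
    exact ENNReal.toReal_mono (measure_ne_top _ _) (measure_mono (Set.Iic_subset_Iic.2 hab))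
  have Fnn0 : ∀ (t : ℕ) (x : ℝ), 0 ≤ F t x := by
    intro t x; rw [hF]; exact ENNReal.toReal_nonneg
  have Fle1 : ∀ (t : ℕ) (x : ℝ), F t x ≤ 1 := by
    intro t x
    haveI := hprob t
    rw [hF]
    have h1 : ν t (Set.Iic x) ≤ 1 := prob_le_one
    have h2 := ENNReal.toReal_mono (by simp) h1
    simpa using h2
  have fnn : ∀ (t : ℕ) (n : ℤ), 0 ≤ f t n := by
    intro t n
    rw [hf]
    have h : (n : ℝ) * θ ≤ ((n : ℝ) + 1) * θ := by nlinarith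
    have := Fmono t h
    linarith
  have sumf : ∀ t : ℕ, Summable (fun n : ℕ => f t ((n : ℤ) - 1)) := by
    intro t
    apply summable_of_sum_range_le (c := 1) (fun n => fnn t _)
    intro N
    have hcong : ∑ i ∈ Finset.range N, f t ((i : ℤ) - 1)
        = ∑ i ∈ Finset.range N, ((fun k : ℕ => F t (((k : ℝ) - 1) * θ)) (i + 1)
            - (fun k : ℕ => F t (((k : ℝ) - 1) * θ)) i) := by
      apply Finset.sum_congr rfl
      intro i _
      show f t ((i : ℤ) - 1)
          = F t (((((i + 1 : ℕ)) : ℝ) - 1) * θ) - F t ((((i : ℕ) : ℝ) - 1) * θ)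
      rw [hf]
      push_cast
      ring_nf
    rw [hcong, Finset.sum_range_sub (fun k : ℕ => F t (((k : ℝ) - 1) * θ)) N]
    show F t (((N : ℝ) - 1) * θ) - F t ((((0 : ℕ) : ℝ) - 1) * θ) ≤ 1
    have h1 := Fle1 t (((N : ℝ) - 1) * θ)
    have h2 := Fnn0 t ((((0 : ℕ) : ℝ) - 1) * θ)
    linarith
  -- floor facts
  have floor1 : ∀ u : ℝ, ((⌊u / θ⌋ : ℝ)) * θ ≤ u := by
    intro u
    have h := Int.floor_le (u / θ)
    have := mul_le_mul_of_nonneg_right h hθ.le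
    rwa [div_mul_cancel₀ u (ne_of_gt hθ)] at this
  have floor2 : ∀ u : ℝ, u < ((⌊u / θ⌋ : ℝ) + 1) * θ := by
    intro u
    have h := Int.lt_floor_add_one (u / θ)
    have := mul_lt_mul_of_pos_right h hθ
    rwa [div_mul_cancel₀ u (ne_of_gt hθ)] at this
  -- main downward induction
  have key : ∀ d : ℕ, ∀ t : ℕ, t < T → T - t = d + 1 →
      ((∀ x y : ℝ, 0 ≤ x → 0 ≤ psi t x y) ∧
       (∀ y : ℝ, Monotone (fun x => psi t x y)) ∧
       (∀ x : ℝ, 0 ≤ x → Monotone (psi t x)) ∧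
       (∀ x y : ℝ, 0 ≤ x → 0 ≤ phi t x y) ∧
       (∀ y : ℝ, Monotone (fun x => phi t x y)) ∧
       (∀ x : ℝ, 0 ≤ x → Monotone (phi t x)) ∧
       Monotone (om t) ∧ Monotone (omb t) ∧
       (∀ z : ℝ, z ≤ SU t → omb t z = eta t)) := by
    intro d
    induction d with
    | zero =>
      intro t ht hd
      have htT : t = T - 1 := by omega
      subst htT
      have hγnn : 0 ≤ γ (T - 1) := hγ _ (by omega)
      have S1 : ∀ x y : ℝ, 0 ≤ x → 0 ≤ psi (T - 1) x y := by
        intro x y hx; rw [hpsiT1]; exact mul_nonneg hγnn hx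
      have S2 : ∀ y : ℝ, Monotone (fun x => psi (T - 1) x y) := by
        intro y a b hab
        simp only [hpsiT1]
        exact mul_le_mul_of_nonneg_left hab hγnn
      have S3 : ∀ x : ℝ, 0 ≤ x → Monotone (psi (T - 1) x) := by
        intro x _ a b _
        rw [hpsiT1, hpsiT1]
      refine ⟨S1, S2, S3, ?_, ?_, ?_, ?_, ?_, ?_⟩
      · intro x y hx
        rw [hphiT1]
        split_ifs
        · exact le_rfl
        · exact mul_nonneg hγnn hx
      · intro y a b hab
        simp only [hphiT1]
        split_ifs
        · exact le_rfl
        · exact mul_le_mul_of_nonneg_left hab hγnn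
      · intro x hx a b hab
        rw [hphiT1, hphiT1]
        split_ifs with h1 h2 h2
        · exact le_rfl
        · exact mul_nonneg hγnn hx
        · exact absurd (lt_of_le_of_lt hab h2) (by exact h1)
        · exact le_rfl
      · intro a b _; rw [homT1, homT1]
      · intro a b _; rw [hombT1, hombT1]
      · intro z _; rw [hombT1, hetaT1]
    | succ d ih =>
      intro t ht hd
      have h2 : t + 2 ≤ T := by omega
      obtain ⟨P1, P2, P3, G1, G2, G3, OM1, OMB1, E1⟩ := ih (t + 1) (by omega) (by omega)
      have hγnn : 0 ≤ γ t := hγ _ (by omega)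
      -- psi formula at t for y ≥ s(t+1) - θ
      have hform : ∀ x y : ℝ, s (t + 1) - θ ≤ y →
          psi t x y = γ t * x + α * ∑ j ∈ Finset.Icc (-1 : ℤ) ((⌊(y - s (t + 1)) / θ⌋ + 1) - 1),
            phi (t + 1) x (y - (j : ℝ) * θ) * f t j := by
        intro x y hy
        apply hpsiB t h2 x y hy (⌊(y - s (t + 1)) / θ⌋ + 1)
        · push_cast
          have := floor1 (y - s (t + 1))
          ring_nf
          ring_nf at this
          linarith
        · push_cast
          exact floor2 (y - s (t + 1))
      have S1 : ∀ x y : ℝ, 0 ≤ x → 0 ≤ psi t x y := by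
        intro x y hx
        rcases lt_or_ge y (s (t + 1) - θ) with hy | hy
        · rw [hpsiA t h2 x y hy]; exact mul_nonneg hγnn hx
        · rw [hform x y hy]
          have hs : 0 ≤ ∑ j ∈ Finset.Icc (-1 : ℤ) ((⌊(y - s (t + 1)) / θ⌋ + 1) - 1),
              phi (t + 1) x (y - (j : ℝ) * θ) * f t j :=
            Finset.sum_nonneg fun j _ => mul_nonneg (G1 x _ hx) (fnn t j)
          have := mul_nonneg hα0.le hs
          have := mul_nonneg hγnn hx
          linarith
      have S2 : ∀ y : ℝ, Monotone (fun x => psi t x y) := by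
        intro y a b hab
        rcases lt_or_ge y (s (t + 1) - θ) with hy | hy
        · simp only [hpsiA t h2 _ y hy]
          exact mul_le_mul_of_nonneg_left hab hγnn
        · simp only [hform _ y hy]
          have hs : ∑ j ∈ Finset.Icc (-1 : ℤ) ((⌊(y - s (t + 1)) / θ⌋ + 1) - 1),
                phi (t + 1) a (y - (j : ℝ) * θ) * f t j
              ≤ ∑ j ∈ Finset.Icc (-1 : ℤ) ((⌊(y - s (t + 1)) / θ⌋ + 1) - 1),
                phi (t + 1) b (y - (j : ℝ) * θ) * f t j :=
            Finset.sum_le_sum fun j _ => mul_le_mul_of_nonneg_right (G2 _ hab) (fnn t j)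
          have h1 := mul_le_mul_of_nonneg_left hs hα0.le
          have h0 := mul_le_mul_of_nonneg_left hab hγnn
          linarith
      have S3 : ∀ x : ℝ, 0 ≤ x → Monotone (psi t x) := by
        intro x hx a b hab
        rcases lt_or_ge b (s (t + 1) - θ) with hb | hb
        · have ha : a < s (t + 1) - θ := lt_of_le_of_lt hab hb
          rw [hpsiA t h2 x a ha, hpsiA t h2 x b hb]
        · rcases lt_or_ge a (s (t + 1) - θ) with ha | ha
          · rw [hpsiA t h2 x a ha, hform x b hb]
            have hs : 0 ≤ ∑ j ∈ Finset.Icc (-1 : ℤ) ((⌊(b - s (t + 1)) / θ⌋ + 1) - 1),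
                phi (t + 1) x (b - (j : ℝ) * θ) * f t j :=
              Finset.sum_nonneg fun j _ => mul_nonneg (G1 x _ hx) (fnn t j)
            nlinarith
          · rw [hform x a ha, hform x b hb]
            have hnn' : ⌊(a - s (t + 1)) / θ⌋ ≤ ⌊(b - s (t + 1)) / θ⌋ := by
              apply Int.floor_mono
              apply div_le_div_of_nonneg_right ?_ hθ.le <;> linarith
            have hsum1 : ∑ j ∈ Finset.Icc (-1 : ℤ) ((⌊(a - s (t + 1)) / θ⌋ + 1) - 1),
                  phi (t + 1) x (a - (j : ℝ) * θ) * f t j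
                ≤ ∑ j ∈ Finset.Icc (-1 : ℤ) ((⌊(a - s (t + 1)) / θ⌋ + 1) - 1),
                  phi (t + 1) x (b - (j : ℝ) * θ) * f t j :=
              Finset.sum_le_sum fun j _ => mul_le_mul_of_nonneg_right
                (G3 x hx (by linarith : a - (j : ℝ) * θ ≤ b - (j : ℝ) * θ)) (fnn t j)
            have hsum2 : ∑ j ∈ Finset.Icc (-1 : ℤ) ((⌊(a - s (t + 1)) / θ⌋ + 1) - 1),
                  phi (t + 1) x (b - (j : ℝ) * θ) * f t j
                ≤ ∑ j ∈ Finset.Icc (-1 : ℤ) ((⌊(b - s (t + 1)) / θ⌋ + 1) - 1),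
                  phi (t + 1) x (b - (j : ℝ) * θ) * f t j := by
              apply Finset.sum_le_sum_of_subset_of_nonneg
                (Finset.Icc_subset_Icc_right (by omega))
              intro j _ _
              exact mul_nonneg (G1 x _ hx) (fnn t j)
            have := mul_le_mul_of_nonneg_left (hsum1.trans hsum2) hα0.le
            linarith
      -- phi facts at t
      have Q1 : ∀ x y : ℝ, 0 ≤ x → 0 ≤ phi t x y := by
        intro x y hx
        rw [hphi t h2]
        split_ifs with h1 h2'
        · exact le_rfl
        · exact S1 _ _ (by linarith)
        · exact S1 _ _ hx
      have Q2 : ∀ y : ℝ, Monotone (fun x => phi t x y) := by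
        intro y a b hab
        show phi t a y ≤ phi t b y
        rw [hphi t h2 a y, hphi t h2 b y]
        rcases lt_or_ge y (s t) with h1 | h1
        · rw [if_pos h1, if_pos h1]
        · rw [if_neg (not_lt.2 h1), if_neg (not_lt.2 h1)]
          rcases lt_or_ge (y - a) (s t) with ha | ha
          · rw [if_pos ha, if_pos (by linarith : y - b < s t)]
          · rw [if_neg (not_lt.2 ha)]
            rcases lt_or_ge (y - b) (s t) with hb | hb
            · rw [if_pos hb]
              exact S2 y (by linarith)
            · rw [if_neg (not_lt.2 hb)]
              exact S2 y hab
      have Q3 : ∀ x : ℝ, 0 ≤ x → Monotone (phi t x) := by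
        intro x hx a b hab
        rw [hphi t h2 x a, hphi t h2 x b]
        rcases lt_or_ge a (s t) with ha | ha
        · rw [if_pos ha]
          rcases lt_or_ge b (s t) with hb | hb
          · rw [if_pos hb]
          · rw [if_neg (not_lt.2 hb)]
            split_ifs with h4
            · exact S1 _ _ (by linarith)
            · exact S1 _ _ hx
        · have hb : ¬ b < s t := not_lt.2 (le_trans ha hab)
          rw [if_neg (not_lt.2 ha), if_neg hb]
          rcases lt_or_ge (a - x) (s t) with h4 | h4
          · rw [if_pos h4]
            rcases lt_or_ge (b - x) (s t) with h5 | h5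
            · rw [if_pos h5]
              exact le_trans (S2 a (by linarith : a - s t ≤ b - s t)) (S3 _ (by linarith) hab)
            · rw [if_neg (not_lt.2 h5)]
              exact le_trans (S2 a (by linarith : a - s t ≤ x)) (S3 x hx hab)
          · rw [if_neg (not_lt.2 h4),
                if_neg (not_lt.2 (by linarith : s t ≤ b - x))]
            exact S3 x hx hab
      -- summability of the omb-weighted series
      have Ssum : ∀ x : ℝ, Summable (fun n : ℕ =>
          omb (t + 1) (x - ((n : ℝ) - 1) * θ) * f t ((n : ℤ) - 1)) := by
        intro x
        obtain ⟨N, hN⟩ := exists_nat_ge ((x - SU (t + 1)) / θ + 1)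
        have hh : Summable (fun n : ℕ => eta (t + 1) * f t ((n : ℤ) - 1)) :=
          (sumf t).mul_left _
        have hdiff : Summable (fun n : ℕ =>
            omb (t + 1) (x - ((n : ℝ) - 1) * θ) * f t ((n : ℤ) - 1)
              - eta (t + 1) * f t ((n : ℤ) - 1)) := by
          apply summable_of_ne_finset_zero (s := Finset.range N)
          intro n hn
          have hnN : N ≤ n := by simpa using hn
          have hc : x - ((n : ℝ) - 1) * θ ≤ SU (t + 1) := by
            have hc1 : ((x - SU (t + 1)) / θ + 1) ≤ (n : ℝ) :=
              hN.trans (by exact_mod_cast hnN)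
            have hc2 : (x - SU (t + 1)) / θ ≤ (n : ℝ) - 1 := by linarith
            have hc3 : x - SU (t + 1) ≤ ((n : ℝ) - 1) * θ := by
              rw [div_le_iff₀ hθ] at hc2; linarith
            linarith
          rw [E1 _ hc]
          ring
        have := hdiff.add hh
        exact this.congr (fun n => by ring)
      have OMt : Monotone (om t) := by
        intro a b hab
        rw [hom t h2 a, hom t h2 b]
        have h1 : psi t θ a ≤ psi t θ b := S3 θ hθ.le hab
        have h3 : (∑' n : ℕ, omb (t + 1) (a - ((n : ℝ) - 1) * θ) * f t ((n : ℤ) - 1))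
            ≤ ∑' n : ℕ, omb (t + 1) (b - ((n : ℝ) - 1) * θ) * f t ((n : ℤ) - 1) := by
          apply Summable.tsum_le_tsum _ (Ssum a) (Ssum b)
          intro n
          exact mul_le_mul_of_nonneg_right (OMB1 (by linarith : a - ((n : ℝ) - 1) * θ ≤ b - ((n : ℝ) - 1) * θ)) (fnn t _)
        have := mul_le_mul_of_nonneg_left h3 hα0.le
        linarith
      have OMBt : Monotone (omb t) := by
        intro a b hab
        rw [homb t h2 a, homb t h2 b]
        split_ifs with ha hb hb
        · exact le_rfl
        · exact le_max_left _ _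
        · exact absurd (hab.trans hb) ha
        · exact max_le_max le_rfl (OMt hab)
      refine ⟨S1, S2, S3, Q1, Q2, Q3, OMt, OMBt, ?_⟩
      intro z hz
      rw [homb t h2 z, if_pos hz]
  intro t ht
  obtain ⟨_, _, _, _, _, _, h7, h8, _⟩ := key (T - t - 1) t ht (by omega)
  exact ⟨h7, h8⟩
end

section
/- For every t = 0,…,T−1, the function H*_t attains its minimum over ℝ, and its smallest minimizer S*_t := min{ x : H*_t(x) = min_{y∈ℝ} H*_t(y) } satisfies S*_t ≤ S^U_t. -/
/-!
By backward induction, each `V*_{t+1}` is lower semicontinuous, bounded below and monotone up to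
a constant `κ` with `α κ ≤ K_t` (`V b ≤ κ + V a` for `b ≤ a`: at worst one pays one more setup).
Fatou's lemma carries lower semicontinuity through the expectation, so `H*_t` is lower
semicontinuous and coercive, hence has a least minimizer `S`, and `H*_t - C_t` is monotone up to
`K_t`. If `S > S^U_t`, then for `z = z_{n₀} ≤ S` convexity gives
`C_t S ≥ C_t S^U_t > C_t z + K_t`, so `H*_t z ≤ C_t z + K_t + (H*_t - C_t) S < H*_t S`.
-/

open MeasureTheory Filter Set

theorem LowerSemicontinuous.isCompact_preimage_Iic {X β : Type*} [TopologicalSpace X]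
    [LinearOrder β] [NoMaxOrder β] {f : X → β} (hf : LowerSemicontinuous f)
    (hcoer : Tendsto f (cocompact X) atTop) (c : β) : IsCompact (f ⁻¹' Iic c) := by
  obtain ⟨K, hK, hKc⟩ := mem_cocompact.1 (hcoer.eventually_gt_atTop c)
  exact hK.of_isClosed_subset (hf.isClosed_preimage c) fun x hx =>
    by_contra fun hxK => (hKc hxK).not_ge hx

theorem LowerSemicontinuous.exists_isLeast_minimizers {X β : Type*} [TopologicalSpace X]
    [LinearOrder X] [ClosedIicTopology X] [Nonempty X] [LinearOrder β] [NoMaxOrder β]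
    {f : X → β} (hf : LowerSemicontinuous f) (hcoer : Tendsto f (cocompact X) atTop) :
    ∃ S, IsLeast {x | ∀ y, f x ≤ f y} S := by
  obtain ⟨x₀⟩ := ‹Nonempty X›
  obtain ⟨a, hax₀, ha⟩ := LowerSemicontinuousOn.exists_isMinOn
    (s := f ⁻¹' Iic (f x₀)) ⟨x₀, le_rfl (a := f x₀)⟩ (hf.isCompact_preimage_Iic hcoer (f x₀))
    (hf.lowerSemicontinuousOn _)
  have hmin : ∀ y, f a ≤ f y := fun y =>
    (le_total (f y) (f x₀)).elim (fun hy => ha hy) fun hy => (hax₀ : f a ≤ f x₀).trans hy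
  have hM : {x | ∀ y, f x ≤ f y} = f ⁻¹' Iic (f a) :=
    ext fun x => ⟨fun h => h a, fun h y => (h : f x ≤ f a).trans (hmin y)⟩
  rw [hM]
  exact (hf.isCompact_preimage_Iic hcoer (f a)).exists_isLeast ⟨a, le_rfl (a := f a)⟩

theorem exists_int_mul_lt_le_add_one_mul {θ : ℝ} (hθ : 0 < θ) (x : ℝ) :
    ∃ n : ℤ, n * θ < x ∧ x ≤ (n + 1) * θ := by
  obtain ⟨n, ⟨hle, hlt⟩, -⟩ := existsUnique_add_zsmul_mem_Ico hθ 0 (x - θ)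
  simp only [zero_add, zsmul_eq_mul, sub_add_cancel] at hle hlt
  exact ⟨n, hlt, by linarith⟩

theorem ConvexOn.monotoneOn_of_isMinOn {𝕜 β : Type*} [Field 𝕜] [LinearOrder 𝕜]
    [IsStrictOrderedRing 𝕜] [AddCommMonoid β] [LinearOrder β] [IsOrderedCancelAddMonoid β]
    [Module 𝕜 β] [PosSMulStrictMono 𝕜 β] {f : 𝕜 → β} {s : Set 𝕜} {m : 𝕜}
    (hf : ConvexOn 𝕜 s f) (hms : m ∈ s) (hm : IsMinOn f s m) : MonotoneOn f (s ∩ Ici m) := by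
  rintro u ⟨hus, hmu⟩ v ⟨hvs, -⟩ huv
  rcases (mem_Ici.1 hmu).eq_or_lt with rfl | hmu
  · exact hm hvs
  · exact hf.le_right_of_left_le'' hms hvs hmu huv (hm hus)

section Fatou

variable {X Ω : Type*} [TopologicalSpace X] [FirstCountableTopology X] [MeasurableSpace Ω]
  {μ : Measure Ω}

theorem lowerSemicontinuous_lintegral {g : X → Ω → ENNReal}
    (hg : ∀ ω, LowerSemicontinuous (g · ω)) (hgm : ∀ x, AEMeasurable (g x) μ) :
    LowerSemicontinuous fun x => ∫⁻ ω, g x ω ∂μ :=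
  lowerSemicontinuous_iff_le_liminf.2 fun x =>
    (lintegral_mono fun ω => (hg ω).le_liminf x).trans (lintegral_liminf_le' hgm)

theorem lowerSemicontinuous_integral_of_nonneg {g : X → Ω → ℝ}
    (hg : ∀ ω, LowerSemicontinuous (g · ω)) (hg₀ : ∀ x ω, 0 ≤ g x ω)
    (hint : ∀ x, Integrable (g x) μ) : LowerSemicontinuous fun x => ∫ ω, g x ω ∂μ := by
  have hlin : LowerSemicontinuous fun x => ENNReal.ofReal (∫ ω, g x ω ∂μ) := by
    simp_rw [ofReal_integral_eq_lintegral_ofReal (hint _) (ae_of_all _ (hg₀ _))]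
    exact lowerSemicontinuous_lintegral
      (fun ω => ENNReal.continuous_ofReal.comp_lowerSemicontinuous (hg ω) ENNReal.ofReal_mono)
      fun x => (hint x).aemeasurable.ennreal_ofReal
  intro x z hz
  rcases lt_or_ge z 0 with hz₀ | hz₀
  · exact Eventually.of_forall fun x' => hz₀.trans_le (integral_nonneg (hg₀ x'))
  · filter_upwards [hlin x _ ((ENNReal.ofReal_lt_ofReal_iff (hz₀.trans_lt hz)).2 hz)] with x' hx'
    exact (ENNReal.ofReal_lt_ofReal_iff'.1 hx').1

theorem lowerSemicontinuous_integral_of_le [IsFiniteMeasure μ] {g : X → Ω → ℝ} {c : ℝ}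
    (hg : ∀ ω, LowerSemicontinuous (g · ω)) (hc : ∀ x ω, c ≤ g x ω)
    (hint : ∀ x, Integrable (g x) μ) : LowerSemicontinuous fun x => ∫ ω, g x ω ∂μ := by
  have hsub := lowerSemicontinuous_integral_of_nonneg (μ := μ) (g := fun x ω => g x ω - c)
    (fun ω => (hg ω).add lowerSemicontinuous_const) (fun x ω => sub_nonneg.2 (hc x ω))
    fun x => (hint x).sub (integrable_const c)
  have hsplit : (fun x => ∫ ω, g x ω ∂μ) = fun x => (∫ ω, g x ω - c ∂μ) + ∫ _, c ∂μ :=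
    funext fun x => by rw [integral_sub (hint x) (integrable_const c), sub_add_cancel]
  rw [hsplit]
  exact hsub.add lowerSemicontinuous_const

end Fatou

def MonotoneUpTo {X : Type*} [Preorder X] (κ : ℝ) (f : X → ℝ) : Prop :=
  ∀ ⦃b a⦄, b ≤ a → f b ≤ κ + f a

namespace MonotoneUpTo

variable {X : Type*} [Preorder X] {κ : ℝ} {f : X → ℝ}

theorem mono {κ' : ℝ} (hf : MonotoneUpTo κ f) (hκ : κ ≤ κ') : MonotoneUpTo κ' f :=
  fun _ _ h => (hf h).trans (by linarith)

theorem const_mul {c : ℝ} (hf : MonotoneUpTo κ f) (hc : 0 ≤ c) :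
    MonotoneUpTo (c * κ) fun x => c * f x :=
  fun _ _ h => by nlinarith [mul_le_mul_of_nonneg_left (hf h) hc]

end MonotoneUpTo

section ExpectedValue

variable {μ : Measure ℝ} {V : ℝ → ℝ} {κ : ℝ}

theorem MonotoneUpTo.integrable_comp_sub [IsFiniteMeasure μ] (hV : MonotoneUpTo κ V)
    (hVm : Measurable V) (hVb : BddBelow (range V)) (hμ : ∀ᵐ ξ ∂μ, 0 ≤ ξ) (y : ℝ) :
    Integrable (fun ξ => V (y - ξ)) μ := by
  obtain ⟨c, hc⟩ := hVb
  refine .of_bound (hVm.comp (measurable_const.sub measurable_id)).aestronglyMeasurable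
    (max |c| |κ + V y|) ?_
  filter_upwards [hμ] with ξ hξ
  exact abs_le_max_abs_abs (hc ⟨_, rfl⟩) (hV (by linarith))

theorem le_integral_comp_sub [IsProbabilityMeasure μ] {c y : ℝ} (hc : c ∈ lowerBounds (range V))
    (hint : Integrable (fun ξ => V (y - ξ)) μ) : c ≤ ∫ ξ, V (y - ξ) ∂μ := by
  simpa using integral_mono (integrable_const c) hint fun ξ => hc ⟨y - ξ, rfl⟩

theorem MonotoneUpTo.integral_comp_sub [IsProbabilityMeasure μ] (hV : MonotoneUpTo κ V)
    (hVm : Measurable V) (hVb : BddBelow (range V)) (hμ : ∀ᵐ ξ ∂μ, 0 ≤ ξ) :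
    MonotoneUpTo κ fun y => ∫ ξ, V (y - ξ) ∂μ := by
  intro b a hba
  have hint := hV.integrable_comp_sub hVm hVb hμ
  calc ∫ ξ, V (b - ξ) ∂μ ≤ ∫ ξ, κ + V (a - ξ) ∂μ :=
        integral_mono_ae (hint b) ((integrable_const κ).add (hint a)) <| by
          filter_upwards [hμ] with ξ hξ
          exact hV (by linarith)
    _ = κ + ∫ ξ, V (a - ξ) ∂μ := by
        rw [integral_add (integrable_const κ) (hint a)]
        simp

theorem MonotoneUpTo.lowerSemicontinuous_integral_comp_sub [IsFiniteMeasure μ]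
    (hV : MonotoneUpTo κ V) (hVl : LowerSemicontinuous V) (hVb : BddBelow (range V))
    (hμ : ∀ᵐ ξ ∂μ, 0 ≤ ξ) : LowerSemicontinuous fun y => ∫ ξ, V (y - ξ) ∂μ := by
  obtain ⟨c, hc⟩ := hVb
  exact lowerSemicontinuous_integral_of_le (fun ξ => hVl.comp (continuous_sub_right ξ))
    (fun y ξ => hc ⟨y - ξ, rfl⟩) (hV.integrable_comp_sub hVl.measurable ⟨c, hc⟩ hμ)

end ExpectedValue

noncomputable def bestOrderValue (K : ℝ) (H : ℝ → ℝ) (x : ℝ) : ℝ :=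
  sInf ((fun y => K * (if x < y then (1 : ℝ) else 0) + H y) '' Ici x)

section BestOrderValue

variable {K : ℝ} {H : ℝ → ℝ}

theorem le_bestOrderValue {x w : ℝ}
    (h : ∀ y, x ≤ y → w ≤ K * (if x < y then (1 : ℝ) else 0) + H y) :
    w ≤ bestOrderValue K H x :=
  le_csInf ⟨_, x, mem_Ici.2 le_rfl, rfl⟩ <| by
    rintro _ ⟨y, hy, rfl⟩
    exact h y hy

theorem bestOrderValue_le (hK : 0 ≤ K) (hH : BddBelow (range H)) {x y : ℝ} (hxy : x ≤ y) :
    bestOrderValue K H x ≤ K * (if x < y then (1 : ℝ) else 0) + H y := by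
  obtain ⟨c, hc⟩ := hH
  refine csInf_le ⟨c, ?_⟩ ⟨y, hxy, rfl⟩
  rintro _ ⟨y, -, rfl⟩
  have := hc ⟨y, rfl⟩
  dsimp only
  split_ifs <;> linarith

theorem bestOrderValue_le_self (hK : 0 ≤ K) (hH : BddBelow (range H)) (x : ℝ) :
    bestOrderValue K H x ≤ H x := by
  simpa using bestOrderValue_le hK hH (le_refl x)

theorem bestOrderValue_le_add (hK : 0 ≤ K) (hH : BddBelow (range H)) {x y : ℝ} (hxy : x ≤ y) :
    bestOrderValue K H x ≤ K + H y :=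
  (bestOrderValue_le hK hH hxy).trans (by split_ifs <;> linarith)

theorem bddBelow_range_bestOrderValue (hK : 0 ≤ K) (hH : BddBelow (range H)) :
    BddBelow (range (bestOrderValue K H)) := by
  obtain ⟨c, hc⟩ := hH
  refine ⟨c, ?_⟩
  rintro _ ⟨x, rfl⟩
  refine le_bestOrderValue fun y _ => ?_
  have := hc ⟨y, rfl⟩
  split_ifs <;> linarith

theorem monotoneUpTo_bestOrderValue (hK : 0 ≤ K) (hH : BddBelow (range H)) :
    MonotoneUpTo K (bestOrderValue K H) := by
  intro b a hba
  suffices bestOrderValue K H b - K ≤ bestOrderValue K H a by linarith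
  refine le_bestOrderValue fun y hy => ?_
  have := bestOrderValue_le_add hK hH (hba.trans hy)
  split_ifs <;> linarith

theorem lowerSemicontinuous_bestOrderValue (hK : 0 ≤ K) (hH : LowerSemicontinuous H)
    (hHb : BddBelow (range H)) : LowerSemicontinuous (bestOrderValue K H) := by
  -- Near `x`, ordering up to a point where `H` is still above `w` costs more than `w`; every
  -- other admissible `y` lies beyond a whole neighbourhood of `x`, so costs `K + H y`, which
  -- already bounds `bestOrderValue K H x > w`.
  intro x z hz
  obtain ⟨w, hzw, hw⟩ := exists_between hz
  have hwH : w < H x := hw.trans_le (bestOrderValue_le_self hK hHb x)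
  obtain ⟨l, u, hx, hlu⟩ := mem_nhds_iff_exists_Ioo_subset.1 (hH x w hwH)
  filter_upwards [isOpen_Ioo.mem_nhds hx] with x' hx'
  refine hzw.trans_le (le_bestOrderValue fun y hy => ?_)
  by_cases hHy : w < H y
  · split_ifs <;> linarith
  · have hyu : u ≤ y := by
      by_contra! hyu
      exact hHy (hlu ⟨hx'.1.trans_le hy, hyu⟩)
    have := bestOrderValue_le_add hK hHb (hx.2.trans_le hyu).le
    rw [if_pos (hx'.2.trans_le hyu)]
    linarith

end BestOrderValue

theorem costToGo_properties {μ : Measure ℝ} [IsProbabilityMeasure μ] (hμ : ∀ᵐ ξ ∂μ, 0 ≤ ξ)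
    {V C H : ℝ → ℝ} {κ α : ℝ} (hα : 0 ≤ α) (hVl : LowerSemicontinuous V)
    (hVb : BddBelow (range V)) (hV : MonotoneUpTo κ V) (hC : Continuous C)
    (hCcoer : Tendsto C (cocompact ℝ) atTop) (hH : ∀ y, H y = C y + α * ∫ ξ, V (y - ξ) ∂μ) :
    LowerSemicontinuous H ∧ Tendsto H (cocompact ℝ) atTop ∧
      MonotoneUpTo (α * κ) fun y => H y - C y := by
  obtain ⟨c, hc⟩ := hVb
  have hint := hV.integrable_comp_sub hVl.measurable ⟨c, hc⟩ hμ
  rw [funext hH]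
  refine ⟨hC.lowerSemicontinuous.add ?_, tendsto_atTop_add_right_of_le _ (α * c) hCcoer
    fun y => mul_le_mul_of_nonneg_left (le_integral_comp_sub hc (hint y)) hα, ?_⟩
  · exact (continuous_const_mul α).comp_lowerSemicontinuous
      (hV.lowerSemicontinuous_integral_comp_sub hVl ⟨c, hc⟩ hμ) (monotone_mul_left_of_nonneg hα)
  · simpa using (hV.integral_comp_sub hVl.measurable ⟨c, hc⟩ hμ).const_mul hα

theorem costToGo_properties_of_recursion (T : ℕ) {α : ℝ} (hα : 0 ≤ α) (K : ℕ → ℝ)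
    (hK₀ : ∀ t, t < T → 0 ≤ K t) (hK : ∀ t, t + 2 ≤ T → α * K (t + 1) ≤ K t)
    (ν : ℕ → Measure ℝ) [∀ t, IsProbabilityMeasure (ν t)] (hν : ∀ t, ∀ᵐ ξ ∂ν t, 0 ≤ ξ)
    (C : ℕ → ℝ → ℝ) (hC : ∀ t, t < T → Continuous (C t))
    (hCcoer : ∀ t, t < T → Tendsto (C t) (cocompact ℝ) atTop) (H V : ℕ → ℝ → ℝ)
    (hVT : ∀ x, V T x = 0)
    (hH : ∀ t, t < T → ∀ y, H t y = C t y + α * ∫ ξ, V (t + 1) (y - ξ) ∂ν t)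
    (hV : ∀ t, t < T → V t = bestOrderValue (K t) (H t)) (t : ℕ) (ht : t < T) :
    LowerSemicontinuous (H t) ∧ Tendsto (H t) (cocompact ℝ) atTop ∧
      MonotoneUpTo (K t) fun y => H t y - C t y := by
  suffices ∀ d t, t + 1 + d = T → ∃ κ, α * κ ≤ K t ∧ LowerSemicontinuous (V (t + 1)) ∧
      BddBelow (range (V (t + 1))) ∧ MonotoneUpTo κ (V (t + 1)) by
    obtain ⟨κ, hακ, hVl, hVb, hVκ⟩ := this (T - (t + 1)) t (by omega)
    obtain ⟨hHl, hHc, hHκ⟩ :=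
      costToGo_properties (hν t) hα hVl hVb hVκ (hC t ht) (hCcoer t ht) (hH t ht)
    exact ⟨hHl, hHc, hHκ.mono hακ⟩
  intro d
  induction d with
  | zero =>
    intro t htT
    have hV0 : V (t + 1) = 0 := funext (htT ▸ hVT)
    rw [hV0]
    exact ⟨0, by simpa using hK₀ t (by omega), lowerSemicontinuous_const,
      ⟨0, by rintro _ ⟨_, rfl⟩; simp⟩, fun b a _ => by simp⟩
  | succ d ih =>
    intro t htT
    obtain ⟨κ, hακ, hVl, hVb, hVκ⟩ := ih (t + 1) (by omega)
    obtain ⟨hHl, hHc, -⟩ := costToGo_properties (hν _) hα hVl hVb hVκ (hC _ (by omega))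
      (hCcoer _ (by omega)) (hH _ (by omega))
    obtain ⟨S, hS, -⟩ := hHl.exists_isLeast_minimizers hHc
    have hHb : BddBelow (range (H (t + 1))) := ⟨H (t + 1) S, by rintro _ ⟨y, rfl⟩; exact hS y⟩
    have hK₁ := hK₀ (t + 1) (by omega)
    rw [hV (t + 1) (by omega)]
    exact ⟨K (t + 1), hK t (by omega), lowerSemicontinuous_bestOrderValue hK₁ hHl hHb,
      bddBelow_range_bestOrderValue hK₁ hHb, monotoneUpTo_bestOrderValue hK₁ hHb⟩

theorem le_of_isMinimizer_add {C G : ℝ → ℝ} {K m z w S : ℝ} (hC : MonotoneOn C (Ici m))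
    (hG : MonotoneUpTo K G) (hS : ∀ y, C S + G S ≤ C y + G y) (hzm : z ≤ m) (hmw : m ≤ w)
    (hgap : C z + K < C w) : S ≤ w := by
  by_contra! hwS
  have hCS := hC hmw (hmw.trans hwS.le) hwS.le
  have hGz := hG (hzm.trans (hmw.trans hwS.le))
  linarith [hS z]

theorem stmt13_general
    (T : ℕ)
    (α : ℝ) (hα0 : 0 < α)
    (K : ℕ → ℝ) (hK0 : ∀ t, t < T → 0 ≤ K t)
    (hKmono : ∀ t, t + 2 ≤ T → α * K (t + 1) ≤ K t)
    (ν : ℕ → MeasureTheory.Measure ℝ)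
    (hprob : ∀ t, MeasureTheory.IsProbabilityMeasure (ν t))
    (hpos : ∀ t, ν t (Set.Iio 0) = 0)
    (C : ℕ → ℝ → ℝ)
    (hCconv : ∀ t, t < T → ConvexOn ℝ Set.univ (C t))
    (hCcoer : ∀ t, t < T → Filter.Tendsto (C t) (Filter.cocompact ℝ) Filter.atTop)
    (Hstar Vstar : ℕ → ℝ → ℝ)
    (hVstarT : ∀ x, Vstar T x = 0)
    (hHstar : ∀ t, t < T → ∀ y,
      Hstar t y = C t y + α * ∫ ξ, Vstar (t + 1) (y - ξ) ∂(ν t))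
    (hVstar : ∀ t, t < T → ∀ x,
      Vstar t x = sInf ((fun y => K t * (if x < y then (1 : ℝ) else 0) + Hstar t y) '' Set.Ici x))
    (θ : ℝ) (hθ : 0 < θ)
    (Cm SU : ℕ → ℝ)
    (hCm : ∀ t, t < T → IsLeast {x | ∀ y, C t x ≤ C t y} (Cm t))
    (hSU : ∀ t, t < T → ∀ n0 : ℤ, (n0 : ℝ) * θ < Cm t → Cm t ≤ ((n0 : ℝ) + 1) * θ →
      IsLeast {w | (∃ m : ℤ, w = (m : ℝ) * θ) ∧ Cm t ≤ w ∧ C t ((n0 : ℝ) * θ) + K t < C t w} (SU t))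
    :
    ∀ t, t < T → ∃ Sst : ℝ, IsLeast {x | ∀ y, Hstar t x ≤ Hstar t y} Sst ∧ Sst ≤ SU t := by
  intro t ht
  obtain ⟨hHl, hHc, hHK⟩ := costToGo_properties_of_recursion T hα0.le K hK0 hKmono ν
    (fun t => ae_iff.2 (measure_mono_null (fun ξ hξ => mem_Iio.2 (not_le.1 hξ)) (hpos t)))
    C (fun t ht => continuousOn_univ.1 ((hCconv t ht).continuousOn isOpen_univ)) hCcoer
    Hstar Vstar hVstarT hHstar (fun t ht => funext (hVstar t ht)) t ht
  obtain ⟨S, hS⟩ := hHl.exists_isLeast_minimizers hHc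
  obtain ⟨n₀, hn₀, hn₀'⟩ := exists_int_mul_lt_le_add_one_mul hθ (Cm t)
  obtain ⟨⟨-, hCmSU, hgap⟩, -⟩ := hSU t ht n₀ hn₀ hn₀'
  have hCmono : MonotoneOn (C t) (Ici (Cm t)) := by
    simpa using (hCconv t ht).monotoneOn_of_isMinOn (mem_univ _) fun y _ => (hCm t ht).1 y
  exact ⟨S, hS,
    le_of_isMinimizer_add hCmono hHK (fun y => by simpa using hS.1 y) hn₀.le hCmSU hgap⟩

theorem stmt13
    (T : ℕ) (hT : 2 ≤ T)
    (α : ℝ) (hα0 : 0 < α) (hα1 : α ≤ 1)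
    (K : ℕ → ℝ) (hK0 : ∀ t, t < T → 0 ≤ K t)
    (hKmono : ∀ t, t + 2 ≤ T → α * K (t + 1) ≤ K t)
    (ν : ℕ → MeasureTheory.Measure ℝ)
    (hprob : ∀ t, MeasureTheory.IsProbabilityMeasure (ν t))
    (hpos : ∀ t, ν t (Set.Iio 0) = 0)
    (F : ℕ → ℝ → ℝ) (hF : ∀ t x, F t x = (ν t (Set.Iic x)).toReal)
    (C : ℕ → ℝ → ℝ)
    (hCconv : ∀ t, t < T → ConvexOn ℝ Set.univ (C t))
    (hCcoer : ∀ t, t < T → Filter.Tendsto (C t) (Filter.cocompact ℝ) Filter.atTop)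
    (Hstar Vstar : ℕ → ℝ → ℝ)
    (hVstarT : ∀ x, Vstar T x = 0)
    (hHstar : ∀ t, t < T → ∀ y,
      Hstar t y = C t y + α * ∫ ξ, Vstar (t + 1) (y - ξ) ∂(ν t))
    (hVstar : ∀ t, t < T → ∀ x,
      Vstar t x = sInf ((fun y => K t * (if x < y then (1 : ℝ) else 0) + Hstar t y) '' Set.Ici x))
    (θ : ℝ) (hθ : 0 < θ)
    (f : ℕ → ℤ → ℝ)
    (hf : ∀ t (n : ℤ), f t n = F t (((n : ℝ) + 1) * θ) - F t ((n : ℝ) * θ))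
    (Cm SU : ℕ → ℝ)
    (hCm : ∀ t, t < T → IsLeast {x | ∀ y, C t x ≤ C t y} (Cm t))
    (hSU : ∀ t, t < T → ∀ n0 : ℤ, (n0 : ℝ) * θ < Cm t → Cm t ≤ ((n0 : ℝ) + 1) * θ →
      IsLeast {w | (∃ m : ℤ, w = (m : ℝ) * θ) ∧ Cm t ≤ w ∧ C t ((n0 : ℝ) * θ) + K t < C t w} (SU t))
    :
    ∀ t, t < T → ∃ Sst : ℝ, IsLeast {x | ∀ y, Hstar t x ≤ Hstar t y} Sst ∧ Sst ≤ SU t :=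
  stmt13_general T α hα0 K hK0 hKmono ν hprob hpos C hCconv hCcoer Hstar Vstar hVstarT hHstar hVstar
    θ hθ Cm SU hCm hSU
end

section
/- For every t = 0,…,T−2 and every x ∈ ℝ, one has ω̄_t(x) ≤ ψ̄_t(θ, S^U_t) + ψ̄_t(θ, max(x, S^U_t)) − γ_t·θ + α·ω̄_{t+1}(θ + max(x, S^U_t)). -/
open MeasureTheory Filter Set

theorem stmt15
    (T : ℕ) (hT : 2 ≤ T)
    (α : ℝ) (hα0 : 0 < α) (hα1 : α ≤ 1)
    (K : ℕ → ℝ) (hK0 : ∀ t, t < T → 0 ≤ K t)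
    (hKmono : ∀ t, t + 2 ≤ T → α * K (t + 1) ≤ K t)
    (ν : ℕ → MeasureTheory.Measure ℝ)
    (hprob : ∀ t, MeasureTheory.IsProbabilityMeasure (ν t))
    (hpos : ∀ t, ν t (Set.Iio 0) = 0)
    (F : ℕ → ℝ → ℝ) (hF : ∀ t x, F t x = (ν t (Set.Iic x)).toReal)
    (C : ℕ → ℝ → ℝ)
    (hCconv : ∀ t, t < T → ConvexOn ℝ Set.univ (C t))
    (hCcoer : ∀ t, t < T → Filter.Tendsto (C t) (Filter.cocompact ℝ) Filter.atTop)
    (θ : ℝ) (hθ : 0 < θ)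
    (f : ℕ → ℤ → ℝ)
    (hf : ∀ t (n : ℤ), f t n = F t (((n : ℝ) + 1) * θ) - F t ((n : ℝ) * θ))
    (Cm SU : ℕ → ℝ)
    (hCm : ∀ t, t < T → IsLeast {x | ∀ y, C t x ≤ C t y} (Cm t))
    (hSU : ∀ t, t < T → ∀ n0 : ℤ, (n0 : ℝ) * θ < Cm t → Cm t ≤ ((n0 : ℝ) + 1) * θ →
      IsLeast {w | (∃ m : ℤ, w = (m : ℝ) * θ) ∧ Cm t ≤ w ∧ C t ((n0 : ℝ) * θ) + K t < C t w} (SU t))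
    (s S : ℕ → ℝ) (I Ibar : ℕ → ℝ)
    (hsT1a : s (T - 1) ≤ Cm (T - 1))
    (hsT1b : C (T - 1) (s (T - 1)) = C (T - 1) (Cm (T - 1)) + K (T - 1))
    (hIbarT1 : Ibar (T - 1) = s (T - 1))
    (hI : ∀ t, t + 2 ≤ T →
      IsGreatest {w | (∃ m : ℤ, w = (m : ℝ) * θ) ∧ w < min (Ibar (t + 1) - θ) (Cm t)} (I t))
    (hIbar : ∀ t, t + 2 ≤ T →
      IsGreatest {w | (∃ m : ℤ, w = (m : ℝ) * θ) ∧ w ≤ I t ∧ C t (I t) + K t < C t w} (Ibar t - θ))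
    (H V : ℕ → ℝ → ℝ)
    (hHT1 : ∀ y, H (T - 1) y = C (T - 1) y)
    (hST1 : S (T - 1) = Cm (T - 1))
    (hV : ∀ t, t < T → ∀ y, V t y = if y < s t then H t (S t) + K t else H t y)
    (hHrec : ∀ t, t + 2 ≤ T → ∀ y,
      H t y = C t y + α * ∑' n : ℕ, V (t + 1) (y - ((n : ℝ) - 1) * θ) * f t ((n : ℤ) - 1))
    (hSdef : ∀ t, t + 2 ≤ T →
      IsGreatest {w | (∃ m : ℤ, w = (m : ℝ) * θ) ∧ I t ≤ w ∧ w ≤ SU t ∧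
        ∀ u, (∃ n : ℤ, u = (n : ℝ) * θ) → I t ≤ u → u ≤ SU t → H t w ≤ H t u} (S t))
    (hsdef0 : ∀ t, t + 2 ≤ T → K t = 0 → s t = S t)
    (hsdef1 : ∀ t, t + 2 ≤ T → 0 < K t →
      IsLeast {w | (∃ m : ℤ, w = (m : ℝ) * θ) ∧ Ibar t ≤ w ∧ w ≤ S t ∧ H t w ≤ H t (S t) + K t} (s t))
    (γ : ℕ → ℝ) (hγ : ∀ t, t < T → 0 ≤ γ t)
    (hLip : ∀ t, t < T → ∀ x y, |C t x - C t y| ≤ γ t * |x - y|)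
    (psi phi : ℕ → ℝ → ℝ → ℝ)
    (hpsiT1 : ∀ x y : ℝ, psi (T - 1) x y = γ (T - 1) * x)
    (hphiT1 : ∀ x y : ℝ, phi (T - 1) x y = if y < s (T - 1) then 0 else γ (T - 1) * x)
    (hpsiA : ∀ t, t + 2 ≤ T → ∀ x y : ℝ, y < s (t + 1) - θ → psi t x y = γ t * x)
    (hpsiB : ∀ t, t + 2 ≤ T → ∀ x y : ℝ, s (t + 1) - θ ≤ y → ∀ n : ℤ,
      ((n : ℝ) - 1) * θ ≤ y - s (t + 1) → y - s (t + 1) < (n : ℝ) * θ →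
      psi t x y = γ t * x
        + α * ∑ j ∈ Finset.Icc (-1 : ℤ) (n - 1), phi (t + 1) x (y - (j : ℝ) * θ) * f t j)
    (hphi : ∀ t, t + 2 ≤ T → ∀ x y : ℝ, phi t x y =
      if y < s t then 0 else if y - x < s t then psi t (y - s t) y else psi t x y)
    (psib phib : ℕ → ℝ → ℝ → ℝ)
    (hpsibT1 : ∀ x y : ℝ, psib (T - 1) x y = γ (T - 1) * x)
    (hphibT1 : ∀ x y : ℝ, phib (T - 1) x y = if y < s (T - 1) then 0 else γ (T - 1) * x)
    (hpsibA : ∀ t, t + 2 ≤ T → ∀ x y : ℝ, y < s (t + 1) - θ → psib t x y = γ t * x)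
    (hpsibB : ∀ t, t + 2 ≤ T → ∀ x y : ℝ, s (t + 1) - θ ≤ y → ∀ n : ℤ,
      ((n : ℝ) - 1) * θ ≤ y - s (t + 1) → y - s (t + 1) < (n : ℝ) * θ →
      psib t x y = γ t * x
        + α * ∑ j ∈ Finset.Icc (-1 : ℤ) (n - 1), phib (t + 1) x (y - (j : ℝ) * θ) * f t j)
    (hphib : ∀ t, t + 2 ≤ T → ∀ x y : ℝ, phib t x y =
      if y < s t then 0 else if y - x < s t then psib t (y - s t + θ) y else psib t x y)
    (om omb : ℕ → ℝ → ℝ) (eta : ℕ → ℝ)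
    (homT1 : ∀ x, om (T - 1) x = 0) (hombT1 : ∀ x, omb (T - 1) x = 0) (hetaT1 : eta (T - 1) = 0)
    (hom : ∀ t, t + 2 ≤ T → ∀ x, om t x =
      psi t θ x - γ t * θ + α * ∑' n : ℕ, omb (t + 1) (x - ((n : ℝ) - 1) * θ) * f t ((n : ℤ) - 1))
    (heta : ∀ t, t + 2 ≤ T → eta t = psib t θ (SU t) + om t (SU t))
    (homb : ∀ t, t + 2 ≤ T → ∀ x, omb t x = if x ≤ SU t then eta t else max (eta t) (om t x))
    :
    ∀ t, t + 2 ≤ T → ∀ x : ℝ,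
      omb t x ≤ psib t θ (SU t) + psib t θ (max x (SU t)) - γ t * θ
        + α * omb (t + 1) (θ + max x (SU t)) := by

  -- basic facts about F and f
  have hT1lt : T - 1 < T := by omega
  have hFle1 : ∀ u : ℕ, ∀ a : ℝ, F u a ≤ 1 := by
    intro u a
    haveI := hprob u
    rw [hF]
    have := prob_le_one (μ := ν u) (s := Set.Iic a)
    simpa using ENNReal.toReal_mono ENNReal.one_ne_top this
  have hFnn : ∀ u : ℕ, ∀ a : ℝ, 0 ≤ F u a := by
    intro u a; rw [hF]; exact ENNReal.toReal_nonneg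
  have hFmono : ∀ u : ℕ, ∀ a b : ℝ, a ≤ b → F u a ≤ F u b := by
    intro u a b hab
    haveI := hprob u
    rw [hF, hF]
    exact ENNReal.toReal_mono (measure_ne_top _ _) (measure_mono (Set.Iic_subset_Iic.2 hab))
  have hfNN : ∀ u : ℕ, ∀ j : ℤ, 0 ≤ f u j := by
    intro u j
    rw [hf]
    have : (j : ℝ) * θ ≤ ((j : ℝ) + 1) * θ := by nlinarith
    linarith [hFmono u ((j : ℝ) * θ) (((j : ℝ) + 1) * θ) this]
  have hfsum : ∀ u : ℕ, ∀ n : ℕ, ∑ i ∈ Finset.range n, f u ((i : ℤ) - 1) ≤ 1 := by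
    intro u n
    have key : ∀ i : ℕ, f u ((i : ℤ) - 1) =
        (fun i : ℕ => F u ((i : ℝ) * θ - θ)) (i + 1) - (fun i : ℕ => F u ((i : ℝ) * θ - θ)) i := by
      intro i
      rw [hf]
      simp only
      congr 1 <;> · congr 1; push_cast; ring
    calc ∑ i ∈ Finset.range n, f u ((i : ℤ) - 1)
        = ∑ i ∈ Finset.range n,
            ((fun i : ℕ => F u ((i : ℝ) * θ - θ)) (i + 1) - (fun i : ℕ => F u ((i : ℝ) * θ - θ)) i) := by
          exact Finset.sum_congr rfl fun i _ => key i
      _ = F u ((n : ℝ) * θ - θ) - F u ((0 : ℝ) * θ - θ) := by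
          rw [Finset.sum_range_sub (fun i : ℕ => F u ((i : ℝ) * θ - θ))]
          norm_num
      _ ≤ 1 := by
          have h1 := hFle1 u ((n : ℝ) * θ - θ)
          have h2 := hFnn u ((0 : ℝ) * θ - θ)
          linarith
  have hfSummable : ∀ u : ℕ, Summable (fun n : ℕ => f u ((n : ℤ) - 1)) :=
    fun u => summable_of_sum_range_le (fun n => hfNN u _) (hfsum u)
  have hftsum : ∀ u : ℕ, ∑' n : ℕ, f u ((n : ℤ) - 1) ≤ 1 :=
    fun u => Summable.tsum_le_of_sum_range_le (hfSummable u) (hfsum u)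
  -- key tsum estimate
  have hkey : ∀ u : ℕ, u + 2 ≤ T →
      (∀ x₁ x₂ : ℝ, x₁ ≤ x₂ → omb (u + 1) x₁ ≤ omb (u + 1) x₂) →
      (∀ x : ℝ, 0 ≤ omb (u + 1) x) →
      ∀ y : ℝ,
        Summable (fun n : ℕ => omb (u + 1) (y - ((n : ℝ) - 1) * θ) * f u ((n : ℤ) - 1)) ∧
        (∑' n : ℕ, omb (u + 1) (y - ((n : ℝ) - 1) * θ) * f u ((n : ℤ) - 1)) ≤ omb (u + 1) (θ + y) := by
    intro u hu hmono hnn y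
    have hb : ∀ n : ℕ, omb (u + 1) (y - ((n : ℝ) - 1) * θ) * f u ((n : ℤ) - 1)
        ≤ omb (u + 1) (θ + y) * f u ((n : ℤ) - 1) := by
      intro n
      refine mul_le_mul_of_nonneg_right (hmono _ _ ?_) (hfNN u _)
      have : (0 : ℝ) ≤ (n : ℝ) := Nat.cast_nonneg n
      nlinarith
    have hnn' : ∀ n : ℕ, 0 ≤ omb (u + 1) (y - ((n : ℝ) - 1) * θ) * f u ((n : ℤ) - 1) :=
      fun n => mul_nonneg (hnn _) (hfNN u _)
    have hsumb : Summable (fun n : ℕ => omb (u + 1) (θ + y) * f u ((n : ℤ) - 1)) :=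
      (hfSummable u).mul_left _
    have hs : Summable (fun n : ℕ => omb (u + 1) (y - ((n : ℝ) - 1) * θ) * f u ((n : ℤ) - 1)) :=
      Summable.of_nonneg_of_le hnn' hb hsumb
    refine ⟨hs, ?_⟩
    calc (∑' n : ℕ, omb (u + 1) (y - ((n : ℝ) - 1) * θ) * f u ((n : ℤ) - 1))
        ≤ ∑' n : ℕ, omb (u + 1) (θ + y) * f u ((n : ℤ) - 1) := Summable.tsum_le_tsum hb hs hsumb
      _ = omb (u + 1) (θ + y) * ∑' n : ℕ, f u ((n : ℤ) - 1) := tsum_mul_left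
      _ ≤ omb (u + 1) (θ + y) * 1 := mul_le_mul_of_nonneg_left (hftsum u) (hnn _)
      _ = omb (u + 1) (θ + y) := mul_one _
  -- the big induction
  have PP : ∀ j t : ℕ, t + j + 1 = T →
      (∀ x y : ℝ, 0 ≤ x → γ t * x ≤ psi t x y) ∧
      (∀ x y : ℝ, 0 ≤ x → 0 ≤ phi t x y) ∧
      (∀ x y : ℝ, 0 ≤ x → γ t * x ≤ psib t x y) ∧
      (∀ x y : ℝ, 0 ≤ x → 0 ≤ phib t x y) ∧
      (∀ x₁ x₂ y : ℝ, 0 ≤ x₁ → x₁ ≤ x₂ → psi t x₁ y ≤ psi t x₂ y) ∧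
      (∀ x₁ x₂ y : ℝ, 0 ≤ x₁ → x₁ ≤ x₂ → phi t x₁ y ≤ phi t x₂ y) ∧
      (∀ x₁ x₂ y : ℝ, 0 ≤ x₁ → x₁ ≤ x₂ → psib t x₁ y ≤ psib t x₂ y) ∧
      (∀ x₁ x₂ y : ℝ, 0 ≤ x₁ → x₁ ≤ x₂ → phib t x₁ y ≤ phib t x₂ y) ∧
      (∀ x y₁ y₂ : ℝ, 0 ≤ x → y₁ ≤ y₂ → psi t x y₁ ≤ psi t x y₂) ∧
      (∀ x y₁ y₂ : ℝ, 0 ≤ x → y₁ ≤ y₂ → phi t x y₁ ≤ phi t x y₂) ∧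
      (∀ x y : ℝ, 0 ≤ x → psi t x y ≤ psib t x y) ∧
      (∀ x y : ℝ, 0 ≤ x → phi t x y ≤ phib t x y) ∧
      (∀ x₁ x₂ : ℝ, x₁ ≤ x₂ → omb t x₁ ≤ omb t x₂) ∧
      (∀ x : ℝ, 0 ≤ omb t x) := by
    intro j
    induction j with
    | zero =>
      intro t htT
      have ht : t = T - 1 := by omega
      subst ht
      have hγ1 := hγ (T - 1) hT1lt
      refine ⟨?_, ?_, ?_, ?_, ?_, ?_, ?_, ?_, ?_, ?_, ?_, ?_, ?_, ?_⟩
      · intro x y hx; rw [hpsiT1]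
      · intro x y hx; rw [hphiT1]; split
        · exact le_rfl
        · exact mul_nonneg hγ1 hx
      · intro x y hx; rw [hpsibT1]
      · intro x y hx; rw [hphibT1]; split
        · exact le_rfl
        · exact mul_nonneg hγ1 hx
      · intro x₁ x₂ y hx1 h12; rw [hpsiT1, hpsiT1]; exact mul_le_mul_of_nonneg_left h12 hγ1
      · intro x₁ x₂ y hx1 h12; rw [hphiT1, hphiT1]; split
        · exact le_rfl
        · exact mul_le_mul_of_nonneg_left h12 hγ1
      · intro x₁ x₂ y hx1 h12; rw [hpsibT1, hpsibT1]; exact mul_le_mul_of_nonneg_left h12 hγ1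
      · intro x₁ x₂ y hx1 h12; rw [hphibT1, hphibT1]; split
        · exact le_rfl
        · exact mul_le_mul_of_nonneg_left h12 hγ1
      · intro x y₁ y₂ hx h12; rw [hpsiT1, hpsiT1]
      · intro x y₁ y₂ hx h12; rw [hphiT1, hphiT1]
        by_cases h1 : y₁ < s (T - 1)
        · rw [if_pos h1]; split
          · exact le_rfl
          · exact mul_nonneg hγ1 hx
        · rw [if_neg h1, if_neg (by push_neg at h1 ⊢; linarith)]
      · intro x y hx; rw [hpsiT1, hpsibT1]
      · intro x y hx; rw [hphiT1, hphibT1]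
      · intro x₁ x₂ h12; rw [hombT1, hombT1]
      · intro x; rw [hombT1]
    | succ j ih =>
      intro t htT
      have ht : t + 2 ≤ T := by omega
      have htlt : t < T := by omega
      have hγ1 := hγ t htlt
      obtain ⟨psiLB1, phiNN1, psibLB1, phibNN1, psiM11, phiM11, psibM11, phibM11,
        psiM21, phiM21, psiLe1, phiLe1, ombM1, ombNN1⟩ := ih (t + 1) (by omega)
      -- representation of psi t / psib t on the nontrivial region
      have hrep : ∀ y : ℝ, s (t + 1) - θ ≤ y →
          ∃ n : ℤ, ((n : ℝ) - 1) * θ ≤ y - s (t + 1) ∧ y - s (t + 1) < (n : ℝ) * θ ∧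
          (∀ x : ℝ, psi t x y = γ t * x
            + α * ∑ jj ∈ Finset.Icc (-1 : ℤ) (n - 1), phi (t + 1) x (y - (jj : ℝ) * θ) * f t jj) ∧
          (∀ x : ℝ, psib t x y = γ t * x
            + α * ∑ jj ∈ Finset.Icc (-1 : ℤ) (n - 1), phib (t + 1) x (y - (jj : ℝ) * θ) * f t jj) := by
        intro y hy
        set a : ℝ := (y - s (t + 1)) / θ with ha
        have h1 : (⌊a⌋ : ℝ) ≤ a := Int.floor_le a
        have h2 : a < ⌊a⌋ + 1 := Int.lt_floor_add_one a
        have hle : (⌊a⌋ : ℝ) * θ ≤ y - s (t + 1) := by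
          rw [ha] at h1; exact (le_div_iff₀ hθ).1 h1
        have hlt : y - s (t + 1) < ((⌊a⌋ : ℝ) + 1) * θ := by
          rw [ha] at h2; exact (div_lt_iff₀ hθ).1 h2
        refine ⟨⌊a⌋ + 1, by push_cast; linarith, by push_cast; linarith, ?_, ?_⟩
        · intro x
          exact hpsiB t ht x y hy (⌊a⌋ + 1) (by push_cast; linarith) (by push_cast; linarith)
        · intro x
          exact hpsibB t ht x y hy (⌊a⌋ + 1) (by push_cast; linarith) (by push_cast; linarith)
      -- lower bounds
      have psiLB : ∀ x y : ℝ, 0 ≤ x → γ t * x ≤ psi t x y := by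
        intro x y hx
        rcases lt_or_ge y (s (t + 1) - θ) with h | h
        · rw [hpsiA t ht x y h]
        · obtain ⟨n, _, _, hpsi, _⟩ := hrep y h
          rw [hpsi x]
          have : 0 ≤ ∑ jj ∈ Finset.Icc (-1 : ℤ) (n - 1), phi (t + 1) x (y - (jj : ℝ) * θ) * f t jj :=
            Finset.sum_nonneg fun jj _ => mul_nonneg (phiNN1 x _ hx) (hfNN t jj)
          nlinarith
      have psibLB : ∀ x y : ℝ, 0 ≤ x → γ t * x ≤ psib t x y := by
        intro x y hx
        rcases lt_or_ge y (s (t + 1) - θ) with h | h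
        · rw [hpsibA t ht x y h]
        · obtain ⟨n, _, _, _, hpsib'⟩ := hrep y h
          rw [hpsib' x]
          have : 0 ≤ ∑ jj ∈ Finset.Icc (-1 : ℤ) (n - 1), phib (t + 1) x (y - (jj : ℝ) * θ) * f t jj :=
            Finset.sum_nonneg fun jj _ => mul_nonneg (phibNN1 x _ hx) (hfNN t jj)
          nlinarith
      -- monotonicity in the first argument
      have psiM1 : ∀ x₁ x₂ y : ℝ, 0 ≤ x₁ → x₁ ≤ x₂ → psi t x₁ y ≤ psi t x₂ y := by
        intro x₁ x₂ y hx1 h12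
        rcases lt_or_ge y (s (t + 1) - θ) with h | h
        · rw [hpsiA t ht x₁ y h, hpsiA t ht x₂ y h]
          exact mul_le_mul_of_nonneg_left h12 hγ1
        · obtain ⟨n, _, _, hpsi, _⟩ := hrep y h
          rw [hpsi x₁, hpsi x₂]
          have hsum : ∑ jj ∈ Finset.Icc (-1 : ℤ) (n - 1), phi (t + 1) x₁ (y - (jj : ℝ) * θ) * f t jj
              ≤ ∑ jj ∈ Finset.Icc (-1 : ℤ) (n - 1), phi (t + 1) x₂ (y - (jj : ℝ) * θ) * f t jj :=
            Finset.sum_le_sum fun jj _ =>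
              mul_le_mul_of_nonneg_right (phiM11 x₁ x₂ _ hx1 h12) (hfNN t jj)
          have := mul_le_mul_of_nonneg_left hsum hα0.le
          have := mul_le_mul_of_nonneg_left h12 hγ1
          linarith
      have psibM1 : ∀ x₁ x₂ y : ℝ, 0 ≤ x₁ → x₁ ≤ x₂ → psib t x₁ y ≤ psib t x₂ y := by
        intro x₁ x₂ y hx1 h12
        rcases lt_or_ge y (s (t + 1) - θ) with h | h
        · rw [hpsibA t ht x₁ y h, hpsibA t ht x₂ y h]
          exact mul_le_mul_of_nonneg_left h12 hγ1
        · obtain ⟨n, _, _, _, hpsib'⟩ := hrep y h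
          rw [hpsib' x₁, hpsib' x₂]
          have hsum : ∑ jj ∈ Finset.Icc (-1 : ℤ) (n - 1), phib (t + 1) x₁ (y - (jj : ℝ) * θ) * f t jj
              ≤ ∑ jj ∈ Finset.Icc (-1 : ℤ) (n - 1), phib (t + 1) x₂ (y - (jj : ℝ) * θ) * f t jj :=
            Finset.sum_le_sum fun jj _ =>
              mul_le_mul_of_nonneg_right (phibM11 x₁ x₂ _ hx1 h12) (hfNN t jj)
          have := mul_le_mul_of_nonneg_left hsum hα0.le
          have := mul_le_mul_of_nonneg_left h12 hγ1
          linarith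
      -- nonnegativity of phi t, phib t
      have phiNN : ∀ x y : ℝ, 0 ≤ x → 0 ≤ phi t x y := by
        intro x y hx
        rw [hphi t ht x y]
        by_cases h1 : y < s t
        · rw [if_pos h1]
        · rw [if_neg h1]
          push_neg at h1
          by_cases h2 : y - x < s t
          · rw [if_pos h2]
            have h3 : (0 : ℝ) ≤ y - s t := by linarith
            calc (0 : ℝ) ≤ γ t * (y - s t) := mul_nonneg hγ1 h3
              _ ≤ psi t (y - s t) y := psiLB _ y h3
          · rw [if_neg h2]
            calc (0 : ℝ) ≤ γ t * x := mul_nonneg hγ1 hx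
              _ ≤ psi t x y := psiLB x y hx
      have phibNN : ∀ x y : ℝ, 0 ≤ x → 0 ≤ phib t x y := by
        intro x y hx
        rw [hphib t ht x y]
        by_cases h1 : y < s t
        · rw [if_pos h1]
        · rw [if_neg h1]
          push_neg at h1
          by_cases h2 : y - x < s t
          · rw [if_pos h2]
            have h3 : (0 : ℝ) ≤ y - s t + θ := by linarith
            calc (0 : ℝ) ≤ γ t * (y - s t + θ) := mul_nonneg hγ1 h3
              _ ≤ psib t (y - s t + θ) y := psibLB _ y h3
          · rw [if_neg h2]
            calc (0 : ℝ) ≤ γ t * x := mul_nonneg hγ1 hx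
              _ ≤ psib t x y := psibLB x y hx
      have phiM1 : ∀ x₁ x₂ y : ℝ, 0 ≤ x₁ → x₁ ≤ x₂ → phi t x₁ y ≤ phi t x₂ y := by
        intro x₁ x₂ y hx1 h12
        rw [hphi t ht x₁ y, hphi t ht x₂ y]
        by_cases h1 : y < s t
        · rw [if_pos h1, if_pos h1]
        · rw [if_neg h1, if_neg h1]
          push_neg at h1
          by_cases h2 : y - x₁ < s t
          · have h3 : y - x₂ < s t := by linarith
            rw [if_pos h2, if_pos h3]
          · rw [if_neg h2]
            push_neg at h2
            by_cases h3 : y - x₂ < s t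
            · rw [if_pos h3]
              exact psiM1 x₁ (y - s t) y hx1 (by linarith)
            · rw [if_neg h3]
              exact psiM1 x₁ x₂ y hx1 h12
      have phibM1 : ∀ x₁ x₂ y : ℝ, 0 ≤ x₁ → x₁ ≤ x₂ → phib t x₁ y ≤ phib t x₂ y := by
        intro x₁ x₂ y hx1 h12
        rw [hphib t ht x₁ y, hphib t ht x₂ y]
        by_cases h1 : y < s t
        · rw [if_pos h1, if_pos h1]
        · rw [if_neg h1, if_neg h1]
          push_neg at h1
          by_cases h2 : y - x₁ < s t
          · have h3 : y - x₂ < s t := by linarith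
            rw [if_pos h2, if_pos h3]
          · rw [if_neg h2]
            push_neg at h2
            by_cases h3 : y - x₂ < s t
            · rw [if_pos h3]
              exact psibM1 x₁ (y - s t + θ) y hx1 (by linarith)
            · rw [if_neg h3]
              exact psibM1 x₁ x₂ y hx1 h12
      -- monotonicity of psi t in the second argument
      have psiM2 : ∀ x y₁ y₂ : ℝ, 0 ≤ x → y₁ ≤ y₂ → psi t x y₁ ≤ psi t x y₂ := by
        intro x y₁ y₂ hx h12
        rcases lt_or_ge y₁ (s (t + 1) - θ) with h1 | h1
        · rw [hpsiA t ht x y₁ h1]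
          exact psiLB x y₂ hx
        · have h2 : s (t + 1) - θ ≤ y₂ := le_trans h1 h12
          obtain ⟨n₁, hn1a, hn1b, hpsi1, _⟩ := hrep y₁ h1
          obtain ⟨n₂, hn2a, hn2b, hpsi2, _⟩ := hrep y₂ h2
          have hn12 : n₁ ≤ n₂ := by
            have : ((n₁ : ℝ) - 1) * θ < (n₂ : ℝ) * θ := by linarith
            have : (n₁ : ℝ) - 1 < (n₂ : ℝ) := by nlinarith
            have : (n₁ : ℝ) < (n₂ : ℝ) + 1 := by linarith
            exact_mod_cast Int.lt_add_one_iff.1 (by exact_mod_cast this)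
          rw [hpsi1 x, hpsi2 x]
          have hstep1 : ∑ jj ∈ Finset.Icc (-1 : ℤ) (n₁ - 1), phi (t + 1) x (y₁ - (jj : ℝ) * θ) * f t jj
              ≤ ∑ jj ∈ Finset.Icc (-1 : ℤ) (n₁ - 1), phi (t + 1) x (y₂ - (jj : ℝ) * θ) * f t jj :=
            Finset.sum_le_sum fun jj _ =>
              mul_le_mul_of_nonneg_right (phiM21 x _ _ hx (by linarith)) (hfNN t jj)
          have hstep2 : ∑ jj ∈ Finset.Icc (-1 : ℤ) (n₁ - 1), phi (t + 1) x (y₂ - (jj : ℝ) * θ) * f t jj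
              ≤ ∑ jj ∈ Finset.Icc (-1 : ℤ) (n₂ - 1), phi (t + 1) x (y₂ - (jj : ℝ) * θ) * f t jj :=
            Finset.sum_le_sum_of_subset_of_nonneg
              (Finset.Icc_subset_Icc_right (by omega))
              (fun jj _ _ => mul_nonneg (phiNN1 x _ hx) (hfNN t jj))
          have := mul_le_mul_of_nonneg_left (le_trans hstep1 hstep2) hα0.le
          linarith
      have phiM2 : ∀ x y₁ y₂ : ℝ, 0 ≤ x → y₁ ≤ y₂ → phi t x y₁ ≤ phi t x y₂ := by
        intro x y₁ y₂ hx h12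
        by_cases h1 : y₁ < s t
        · rw [hphi t ht x y₁, if_pos h1]
          exact phiNN x y₂ hx
        · push_neg at h1
          have h2 : ¬ y₂ < s t := by push_neg; linarith
          rw [hphi t ht x y₁, hphi t ht x y₂, if_neg (by push_neg; linarith), if_neg h2]
          by_cases h3 : y₁ - x < s t
          · rw [if_pos h3]
            by_cases h4 : y₂ - x < s t
            · rw [if_pos h4]
              calc psi t (y₁ - s t) y₁ ≤ psi t (y₂ - s t) y₁ :=
                    psiM1 _ _ _ (by linarith) (by linarith)
                _ ≤ psi t (y₂ - s t) y₂ := psiM2 _ _ _ (by linarith) h12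
            · rw [if_neg h4]
              push_neg at h4
              calc psi t (y₁ - s t) y₁ ≤ psi t x y₁ := psiM1 _ _ _ (by linarith) (by linarith)
                _ ≤ psi t x y₂ := psiM2 _ _ _ hx h12
          · rw [if_neg h3]
            push_neg at h3
            have h4 : ¬ y₂ - x < s t := by push_neg; linarith
            rw [if_neg h4]
            exact psiM2 _ _ _ hx h12
      -- psi ≤ psib, phi ≤ phib
      have psiLe : ∀ x y : ℝ, 0 ≤ x → psi t x y ≤ psib t x y := by
        intro x y hx
        rcases lt_or_ge y (s (t + 1) - θ) with h | h
        · rw [hpsiA t ht x y h, hpsibA t ht x y h]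
        · obtain ⟨n, _, _, hpsi, hpsib'⟩ := hrep y h
          rw [hpsi x, hpsib' x]
          have hsum : ∑ jj ∈ Finset.Icc (-1 : ℤ) (n - 1), phi (t + 1) x (y - (jj : ℝ) * θ) * f t jj
              ≤ ∑ jj ∈ Finset.Icc (-1 : ℤ) (n - 1), phib (t + 1) x (y - (jj : ℝ) * θ) * f t jj :=
            Finset.sum_le_sum fun jj _ =>
              mul_le_mul_of_nonneg_right (phiLe1 x _ hx) (hfNN t jj)
          have := mul_le_mul_of_nonneg_left hsum hα0.le
          linarith
      have phiLe : ∀ x y : ℝ, 0 ≤ x → phi t x y ≤ phib t x y := by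
        intro x y hx
        rw [hphi t ht x y, hphib t ht x y]
        by_cases h1 : y < s t
        · rw [if_pos h1, if_pos h1]
        · rw [if_neg h1, if_neg h1]
          push_neg at h1
          by_cases h2 : y - x < s t
          · rw [if_pos h2, if_pos h2]
            calc psi t (y - s t) y ≤ psib t (y - s t) y := psiLe _ y (by linarith)
              _ ≤ psib t (y - s t + θ) y := psibM1 _ _ _ (by linarith) (by linarith)
          · rw [if_neg h2, if_neg h2]
            exact psiLe x y hx
      -- om / omb facts
      have hk := hkey t ht ombM1 ombNN1
      have homNN : ∀ y : ℝ, 0 ≤ om t y := by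
        intro y
        rw [hom t ht y]
        have h1 : γ t * θ ≤ psi t θ y := psiLB θ y hθ.le
        have h2 : 0 ≤ ∑' n : ℕ, omb (t + 1) (y - ((n : ℝ) - 1) * θ) * f t ((n : ℤ) - 1) :=
          tsum_nonneg fun n => mul_nonneg (ombNN1 _) (hfNN t _)
        nlinarith
      have homM : ∀ y₁ y₂ : ℝ, y₁ ≤ y₂ → om t y₁ ≤ om t y₂ := by
        intro y₁ y₂ h12
        rw [hom t ht y₁, hom t ht y₂]
        have h1 : psi t θ y₁ ≤ psi t θ y₂ := psiM2 θ y₁ y₂ hθ.le h12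
        have h2 : (∑' n : ℕ, omb (t + 1) (y₁ - ((n : ℝ) - 1) * θ) * f t ((n : ℤ) - 1))
            ≤ ∑' n : ℕ, omb (t + 1) (y₂ - ((n : ℝ) - 1) * θ) * f t ((n : ℤ) - 1) :=
          Summable.tsum_le_tsum
            (fun n => mul_le_mul_of_nonneg_right (ombM1 _ _ (by linarith)) (hfNN t _))
            (hk y₁).1 (hk y₂).1
        have := mul_le_mul_of_nonneg_left h2 hα0.le
        linarith
      have hetaNN : 0 ≤ eta t := by
        rw [heta t ht]
        have h1 : γ t * θ ≤ psib t θ (SU t) := psibLB θ _ hθ.le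
        have h2 : 0 ≤ om t (SU t) := homNN _
        nlinarith [mul_nonneg hγ1 hθ.le]
      have ombNN : ∀ x : ℝ, 0 ≤ omb t x := by
        intro x
        rw [homb t ht x]
        split
        · exact hetaNN
        · exact le_trans hetaNN (le_max_left _ _)
      have ombM : ∀ x₁ x₂ : ℝ, x₁ ≤ x₂ → omb t x₁ ≤ omb t x₂ := by
        intro x₁ x₂ h12
        rw [homb t ht x₁, homb t ht x₂]
        by_cases h1 : x₁ ≤ SU t
        · rw [if_pos h1]
          split
          · exact le_rfl
          · exact le_max_left _ _
        · rw [if_neg h1, if_neg (by push_neg at h1 ⊢; linarith)]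
          exact max_le_max le_rfl (homM _ _ h12)
      exact ⟨psiLB, phiNN, psibLB, phibNN, psiM1, phiM1, psibM1, phibM1, psiM2, phiM2,
        psiLe, phiLe, ombM, ombNN⟩
  -- final assembly
  intro t ht x
  have htlt : t < T := by omega
  have hγ1 := hγ t htlt
  obtain ⟨psiLB, _, psibLB, _, _, _, _, _, psiM2, _, psiLe, _, _, _⟩ :=
    PP (T - t - 1) t (by omega)
  obtain ⟨_, _, _, _, _, _, _, _, _, _, _, _, ombM1, ombNN1⟩ :=
    PP (T - t - 2) (t + 1) (by omega)
  have hk := hkey t ht ombM1 ombNN1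
  have homB : ∀ y : ℝ, om t y ≤ psi t θ y - γ t * θ + α * omb (t + 1) (θ + y) := by
    intro y
    rw [hom t ht y]
    have := mul_le_mul_of_nonneg_left (hk y).2 hα0.le
    linarith
  rcases le_or_gt x (SU t) with hx | hx
  · rw [max_eq_right hx]
    rw [homb t ht x, if_pos hx, heta t ht]
    have h1 := homB (SU t)
    have h2 : psi t θ (SU t) ≤ psib t θ (SU t) := psiLe θ _ hθ.le
    linarith
  · rw [max_eq_left hx.le]
    rw [homb t ht x, if_neg (not_le.2 hx)]
    have h0 : 0 ≤ psib t θ (SU t) := le_trans (mul_nonneg hγ1 hθ.le) (psibLB θ _ hθ.le)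
    refine max_le ?_ ?_
    · rw [heta t ht]
      have h1 := homB (SU t)
      have h2 : psi t θ (SU t) ≤ psi t θ x := psiM2 θ _ _ hθ.le hx.le
      have h3 : psi t θ x ≤ psib t θ x := psiLe θ x hθ.le
      have h4 : omb (t + 1) (θ + SU t) ≤ omb (t + 1) (θ + x) := ombM1 _ _ (by linarith)
      have := mul_le_mul_of_nonneg_left h4 hα0.le
      linarith
    · have h1 := homB x
      have h2 : psi t θ x ≤ psib t θ x := psiLe θ x hθ.le
      linarith
end

section
/- For every grid point z_j ∈ Z_θ and every t = 0,…,T−2, one has ψ̄_t(θ, z_j) ≤ γ_t·θ + θ·Σ_{n=1}^{T−1−t} α^n·γ_{t+n}·Π_{m=0}^{n−1} F_{t+m}( z_j + (m+1)·θ − s_{t+m+1} ). -/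
/-!
Write `B_t(y)` for the right-hand side with `z_j` replaced by `y` (`psiBarBound`). Peeling off
the `n = 1` term gives `B_t(y) = γ_t θ + α F_t(y + θ - s_{t+1}) B_{t+1}(y + θ)`, and `B_{t+1}` is
nonnegative and monotone. By downward induction on `t`, `φ̄_{t+1}(θ, z_k) ≤ B_{t+1}(z_k)` on the
grid. In the recursion for `ψ̄_t(θ, z_j)` only indices `m ≥ -1` occur, so every `φ̄_{t+1}` term is
at most `B_{t+1}(z_j + θ)`, while the weights `f_t(m)` telescope to at most
`F_t(z_j + θ - s_{t+1})`. The induction passes from `ψ̄_t` back to `φ̄_t` because `s_t` lies on the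
grid: the middle case of `φ̄_t(θ, z_k)` then forces `z_k = s_t`, where it is `ψ̄_t(θ, z_k)`.
-/

open MeasureTheory Finset

theorem Int.sum_Ico_sub {M : Type*} [AddCommGroup M] (g : ℤ → M) {a b : ℤ}
    (hab : a ≤ b) : ∑ m ∈ Ico a b, (g (m + 1) - g m) = g b - g a := by
  induction b, hab using Int.leInduction with
  | base => simp
  | succ b hab ih =>
    rw [← insert_Ico_right_eq_Ico_add_one hab, sum_insert (by simp), ih]
    abel

theorem Finset.sum_Icc_one_eq_sum_range {M : Type*} [AddCommMonoid M] (g : ℕ → M) (n : ℕ) :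
    ∑ k ∈ Icc 1 n, g k = ∑ k ∈ range n, g (k + 1) := by
  rw [← Ico_add_one_right_eq_Icc, sum_Ico_eq_sum_range, add_tsub_cancel_right]
  simp only [add_comm 1]

section GridBound

variable (T : ℕ) (α θ : ℝ) (γ s : ℕ → ℝ) (F : ℕ → ℝ → ℝ)

noncomputable def psiBarBound (t : ℕ) (y : ℝ) : ℝ :=
  γ t * θ + θ * ∑ n ∈ Icc 1 (T - 1 - t), α ^ n * γ (t + n)
    * ∏ m ∈ range n, F (t + m) (y + ((m : ℝ) + 1) * θ - s (t + m + 1))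

theorem psiBarBound_last (y : ℝ) : psiBarBound T α θ γ s F (T - 1) y = γ (T - 1) * θ := by
  simp [psiBarBound]

variable {T α θ γ s F}

theorem psiBarBound_succ {t : ℕ} (ht : t + 2 ≤ T) (y : ℝ) :
    psiBarBound T α θ γ s F t y =
      γ t * θ + α * F t (y + θ - s (t + 1)) * psiBarBound T α θ γ s F (t + 1) (y + θ) := by
  obtain ⟨N, hN⟩ : ∃ N, T - 1 - t = N + 1 := ⟨T - 2 - t, by omega⟩
  have hN' : T - 1 - (t + 1) = N := by omega
  have hterm : ∀ k : ℕ, α ^ (k + 1 + 1) * γ (t + (k + 1 + 1))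
      * ∏ m ∈ range (k + 1 + 1), F (t + m) (y + ((m : ℝ) + 1) * θ - s (t + m + 1))
      = α * F t (y + θ - s (t + 1)) * (α ^ (k + 1) * γ (t + 1 + (k + 1))
        * ∏ m ∈ range (k + 1), F (t + 1 + m) (y + θ + ((m : ℝ) + 1) * θ - s (t + 1 + m + 1))) := by
    intro k
    have hshift : ∀ m : ℕ, F (t + (m + 1)) (y + (((m + 1 : ℕ) : ℝ) + 1) * θ - s (t + (m + 1) + 1))
        = F (t + 1 + m) (y + θ + ((m : ℝ) + 1) * θ - s (t + 1 + m + 1)) := fun m => by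
      rw [← add_assoc, add_right_comm t m 1]
      push_cast
      ring_nf
    rw [prod_range_succ', prod_congr rfl fun m _ => hshift m,
      show t + (k + 1 + 1) = t + 1 + (k + 1) by omega]
    simp only [Nat.cast_zero, zero_add, add_zero, one_mul, pow_succ]
    ring
  simp only [psiBarBound, hN, hN', sum_Icc_one_eq_sum_range, sum_range_succ' _ N, hterm,
    ← mul_sum, zero_add, prod_range_one, Nat.cast_zero, add_zero, one_mul, pow_one]
  ring

theorem psiBarBound_nonneg (hα : 0 ≤ α) (hθ : 0 ≤ θ) (hγ : ∀ t < T, 0 ≤ γ t)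
    (hF : ∀ t x, 0 ≤ F t x) {t : ℕ} (ht : t < T) (y : ℝ) : 0 ≤ psiBarBound T α θ γ s F t y := by
  refine add_nonneg (mul_nonneg (hγ t ht) hθ) (mul_nonneg hθ (sum_nonneg fun n hn => ?_))
  exact mul_nonneg (mul_nonneg (pow_nonneg hα n) (hγ _ (by grind)))
    (prod_nonneg fun m _ => hF _ _)

theorem psiBarBound_monotone (hα : 0 ≤ α) (hθ : 0 ≤ θ) (hγ : ∀ t < T, 0 ≤ γ t)
    (hF : ∀ t x, 0 ≤ F t x) (hFmono : ∀ t, Monotone (F t)) (t : ℕ) :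
    Monotone (psiBarBound T α θ γ s F t) := by
  intro y z hyz
  unfold psiBarBound
  gcongr with n hn m
  · exact mul_nonneg (pow_nonneg hα n) (hγ _ (by grind))
  · exact fun m _ => hF _ _
  · exact hFmono _ (by linarith)

end GridBound

section GridRecursion

variable {θ α c s : ℝ} {g b : ℝ → ℝ}

theorem phi_le_of_psi_le (hθ : 0 < θ) (hs : ∃ m : ℤ, s = m * θ) (hb : ∀ y, 0 ≤ b y)
    {psi : ℝ → ℝ → ℝ} {phi : ℝ → ℝ}
    (hphi : ∀ y, phi y = if y < s then 0 else if y - θ < s then psi (y - s + θ) y else psi θ y)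
    (hpsi : ∀ k : ℤ, psi θ (k * θ) ≤ b (k * θ)) (k : ℤ) : phi (k * θ) ≤ b (k * θ) := by
  obtain ⟨m, rfl⟩ := hs
  rw [hphi]
  split_ifs with hlt hnear
  · exact hb _
  · -- both `k * θ` and `s = m * θ` lie on the grid, so `s ≤ k * θ < s + θ` forces `k = m`
    have h1 : m ≤ k := by
      exact_mod_cast le_of_not_gt fun h => hlt (mul_lt_mul_of_pos_right h hθ)
    have h2 : k < m + 1 := by
      exact_mod_cast lt_of_mul_lt_mul_right (show (k : ℝ) * θ < (m + 1) * θ by linarith) hθ.le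
    obtain rfl : k = m := by omega
    simpa using hpsi k
  · exact hpsi k

theorem sum_mul_increment_le (hθ : 0 < θ) (hg : Monotone g) (hg0 : ∀ x, 0 ≤ g x) {B : ℝ}
    (hB : 0 ≤ B) {f : ℤ → ℝ} (hf : ∀ m : ℤ, f m = g ((m + 1) * θ) - g (m * θ)) {w : ℤ → ℝ}
    {n : ℤ} (hn : -1 ≤ n) (hw : ∀ m ∈ Icc (-1 : ℤ) n, w m ≤ B) :
    ∑ m ∈ Icc (-1 : ℤ) n, w m * f m ≤ B * g ((n + 1) * θ) := by
  have hf0 : ∀ m : ℤ, 0 ≤ f m := fun m => by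
    rw [hf]; exact sub_nonneg.mpr (hg (by nlinarith))
  have htelescope : ∑ m ∈ Icc (-1 : ℤ) n, f m = g ((n + 1) * θ) - g (-θ) := by
    have := Int.sum_Ico_sub (fun m : ℤ => g (m * θ)) (show -1 ≤ n + 1 by omega)
    push_cast at this
    simpa [Ico_add_one_right_eq_Icc, hf] using this
  calc ∑ m ∈ Icc (-1 : ℤ) n, w m * f m ≤ ∑ m ∈ Icc (-1 : ℤ) n, B * f m :=
        sum_le_sum fun m hm => mul_le_mul_of_nonneg_right (hw m hm) (hf0 m)
    _ = B * (g ((n + 1) * θ) - g (-θ)) := by rw [← mul_sum, htelescope]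
    _ ≤ B * g ((n + 1) * θ) := mul_le_mul_of_nonneg_left (by linarith [hg0 (-θ)]) hB

theorem psi_le_of_phi_le (hθ : 0 < θ) (hα : 0 ≤ α) (hg : Monotone g) (hg0 : ∀ x, 0 ≤ g x)
    (hb : Monotone b) (hb0 : ∀ y, 0 ≤ b y) {f : ℤ → ℝ}
    (hf : ∀ m : ℤ, f m = g ((m + 1) * θ) - g (m * θ)) {psi phi : ℝ → ℝ}
    (hpsi_low : ∀ y, y < s - θ → psi y = c)
    (hpsi : ∀ y, s - θ ≤ y → ∀ n : ℤ, (n - 1) * θ ≤ y - s → y - s < n * θ →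
      psi y = c + α * ∑ m ∈ Icc (-1 : ℤ) (n - 1), phi (y - m * θ) * f m)
    (hphi : ∀ k : ℤ, phi (k * θ) ≤ b (k * θ)) (j : ℤ) :
    psi (j * θ) ≤ c + α * g (j * θ + θ - s) * b (j * θ + θ) := by
  rcases lt_or_ge (j * θ) (s - θ) with hlow | hhigh
  · rw [hpsi_low _ hlow]
    have := mul_nonneg (mul_nonneg hα (hg0 (j * θ + θ - s))) (hb0 (j * θ + θ))
    linarith
  obtain ⟨n, ⟨hn_le, hn_lt⟩, -⟩ := existsUnique_zsmul_near_of_pos hθ (j * θ - s)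
  simp only [zsmul_eq_mul, Int.cast_add, Int.cast_one] at hn_le hn_lt
  have hn : -1 ≤ n := by
    have : (-1 : ℝ) < n + 1 := lt_of_mul_lt_mul_right (by linarith) hθ.le
    have : (-1 : ℤ) < n + 1 := by exact_mod_cast this
    omega
  have hphi_le : ∀ m ∈ Icc (-1 : ℤ) n, phi (j * θ - m * θ) ≤ b (j * θ + θ) := by
    intro m hm
    have hm : (-1 : ℝ) ≤ m := by exact_mod_cast (mem_Icc.mp hm).1
    calc phi (j * θ - m * θ) = phi ((j - m : ℤ) * θ) := by push_cast; ring_nf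
      _ ≤ b ((j - m : ℤ) * θ) := hphi _
      _ ≤ b (j * θ + θ) := hb (by push_cast; nlinarith)
  have hsum := sum_mul_increment_le hθ hg hg0 (hb0 (j * θ + θ)) hf hn hphi_le
  have hgn : g ((n + 1) * θ) ≤ g (j * θ + θ - s) := hg (by linarith)
  rw [hpsi _ hhigh (n + 1) (by push_cast; linarith) (by push_cast; linarith), add_sub_cancel_right]
  have := mul_le_mul_of_nonneg_left hgn (hb0 (j * θ + θ))
  nlinarith

end GridRecursion

theorem stmt16_general
    (T : ℕ)
    (α : ℝ) (hα0 : 0 < α)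
    (K : ℕ → ℝ) (hK0 : ∀ t, t < T → 0 ≤ K t)
    (ν : ℕ → MeasureTheory.Measure ℝ)
    (hprob : ∀ t, MeasureTheory.IsProbabilityMeasure (ν t))
    (F : ℕ → ℝ → ℝ) (hF : ∀ t x, F t x = (ν t (Set.Iic x)).toReal)
    (θ : ℝ) (hθ : 0 < θ)
    (f : ℕ → ℤ → ℝ)
    (hf : ∀ t (n : ℤ), f t n = F t (((n : ℝ) + 1) * θ) - F t ((n : ℝ) * θ))
    (SU : ℕ → ℝ)
    (s S : ℕ → ℝ) (I Ibar : ℕ → ℝ)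
    (H : ℕ → ℝ → ℝ)
    (hSdef : ∀ t, t + 2 ≤ T →
      IsGreatest {w | (∃ m : ℤ, w = (m : ℝ) * θ) ∧ I t ≤ w ∧ w ≤ SU t ∧
        ∀ u, (∃ n : ℤ, u = (n : ℝ) * θ) → I t ≤ u → u ≤ SU t → H t w ≤ H t u} (S t))
    (hsdef0 : ∀ t, t + 2 ≤ T → K t = 0 → s t = S t)
    (hsdef1 : ∀ t, t + 2 ≤ T → 0 < K t →
      IsLeast {w | (∃ m : ℤ, w = (m : ℝ) * θ) ∧ Ibar t ≤ w ∧ w ≤ S t ∧ H t w ≤ H t (S t) + K t} (s t))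
    (γ : ℕ → ℝ) (hγ : ∀ t, t < T → 0 ≤ γ t)
    (psib phib : ℕ → ℝ → ℝ → ℝ)
    (hphibT1 : ∀ x y : ℝ, phib (T - 1) x y = if y < s (T - 1) then 0 else γ (T - 1) * x)
    (hpsibA : ∀ t, t + 2 ≤ T → ∀ x y : ℝ, y < s (t + 1) - θ → psib t x y = γ t * x)
    (hpsibB : ∀ t, t + 2 ≤ T → ∀ x y : ℝ, s (t + 1) - θ ≤ y → ∀ n : ℤ,
      ((n : ℝ) - 1) * θ ≤ y - s (t + 1) → y - s (t + 1) < (n : ℝ) * θ →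
      psib t x y = γ t * x
        + α * ∑ j ∈ Finset.Icc (-1 : ℤ) (n - 1), phib (t + 1) x (y - (j : ℝ) * θ) * f t j)
    (hphib : ∀ t, t + 2 ≤ T → ∀ x y : ℝ, phib t x y =
      if y < s t then 0 else if y - x < s t then psib t (y - s t + θ) y else psib t x y)
    :
    ∀ t, t + 2 ≤ T → ∀ j : ℤ,
      psib t θ ((j : ℝ) * θ) ≤ γ t * θ
        + θ * ∑ n ∈ Finset.Icc 1 (T - 1 - t), α ^ n * γ (t + n)
            * ∏ m ∈ Finset.range n, F (t + m) ((j : ℝ) * θ + ((m : ℝ) + 1) * θ - s (t + m + 1)) := by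
  have hF0 : ∀ t x, 0 ≤ F t x := fun t x => (hF t x) ▸ ENNReal.toReal_nonneg
  have hFmono : ∀ t, Monotone (F t) := fun t x y hxy => by
    rw [hF, hF]
    exact measureReal_mono (Set.Iic_subset_Iic.mpr hxy) (measure_ne_top _ _)
  have hs_grid : ∀ t, t + 2 ≤ T → ∃ m : ℤ, s t = m * θ := fun t ht => by
    rcases (hK0 t (by omega)).eq_or_lt with hK | hK
    · rw [hsdef0 t ht hK.symm]; exact (hSdef t ht).1.1
    · exact (hsdef1 t ht hK).1.1
  have hB0 : ∀ t < T, ∀ y, 0 ≤ psiBarBound T α θ γ s F t y :=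
    fun t ht => psiBarBound_nonneg hα0.le hθ.le hγ hF0 ht
  have hpsib_le : ∀ t, t + 2 ≤ T →
      (∀ k : ℤ, phib (t + 1) θ (k * θ) ≤ psiBarBound T α θ γ s F (t + 1) (k * θ)) →
      ∀ j : ℤ, psib t θ (j * θ) ≤ psiBarBound T α θ γ s F t (j * θ) := fun t ht hphi j => by
    rw [psiBarBound_succ ht]
    exact psi_le_of_phi_le hθ hα0.le (hFmono t) (hF0 t)
      (psiBarBound_monotone hα0.le hθ.le hγ hF0 hFmono (t + 1)) (hB0 (t + 1) (by omega))
      (hf t) (hpsibA t ht θ) (hpsibB t ht θ) hphi j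
  have hphib_le : ∀ t, t + 2 ≤ T → ∀ k : ℤ,
      phib (t + 1) θ (k * θ) ≤ psiBarBound T α θ γ s F (t + 1) (k * θ) := by
    intro t ht
    induction (show t ≤ T - 2 by omega) using Nat.decreasingInduction with
    | self =>
      intro k
      rw [show T - 2 + 1 = T - 1 by omega, hphibT1, psiBarBound_last]
      split_ifs
      exacts [mul_nonneg (hγ _ (by omega)) hθ.le, le_rfl]
    | of_succ t ht' ih =>
      exact phi_le_of_psi_le hθ (hs_grid (t + 1) (by omega)) (hB0 (t + 1) (by omega))
        (hphib (t + 1) (by omega) θ) (hpsib_le (t + 1) (by omega) (ih (by omega)))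
  exact fun t ht j => hpsib_le t ht (hphib_le t ht) j

theorem stmt16
    (T : ℕ) (hT : 2 ≤ T)
    (α : ℝ) (hα0 : 0 < α) (hα1 : α ≤ 1)
    (K : ℕ → ℝ) (hK0 : ∀ t, t < T → 0 ≤ K t)
    (hKmono : ∀ t, t + 2 ≤ T → α * K (t + 1) ≤ K t)
    (ν : ℕ → MeasureTheory.Measure ℝ)
    (hprob : ∀ t, MeasureTheory.IsProbabilityMeasure (ν t))
    (hpos : ∀ t, ν t (Set.Iio 0) = 0)
    (F : ℕ → ℝ → ℝ) (hF : ∀ t x, F t x = (ν t (Set.Iic x)).toReal)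
    (C : ℕ → ℝ → ℝ)
    (hCconv : ∀ t, t < T → ConvexOn ℝ Set.univ (C t))
    (hCcoer : ∀ t, t < T → Filter.Tendsto (C t) (Filter.cocompact ℝ) Filter.atTop)
    (θ : ℝ) (hθ : 0 < θ)
    (f : ℕ → ℤ → ℝ)
    (hf : ∀ t (n : ℤ), f t n = F t (((n : ℝ) + 1) * θ) - F t ((n : ℝ) * θ))
    (Cm SU : ℕ → ℝ)
    (hCm : ∀ t, t < T → IsLeast {x | ∀ y, C t x ≤ C t y} (Cm t))
    (hSU : ∀ t, t < T → ∀ n0 : ℤ, (n0 : ℝ) * θ < Cm t → Cm t ≤ ((n0 : ℝ) + 1) * θ →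
      IsLeast {w | (∃ m : ℤ, w = (m : ℝ) * θ) ∧ Cm t ≤ w ∧ C t ((n0 : ℝ) * θ) + K t < C t w} (SU t))
    (s S : ℕ → ℝ) (I Ibar : ℕ → ℝ)
    (hsT1a : s (T - 1) ≤ Cm (T - 1))
    (hsT1b : C (T - 1) (s (T - 1)) = C (T - 1) (Cm (T - 1)) + K (T - 1))
    (hIbarT1 : Ibar (T - 1) = s (T - 1))
    (hI : ∀ t, t + 2 ≤ T →
      IsGreatest {w | (∃ m : ℤ, w = (m : ℝ) * θ) ∧ w < min (Ibar (t + 1) - θ) (Cm t)} (I t))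
    (hIbar : ∀ t, t + 2 ≤ T →
      IsGreatest {w | (∃ m : ℤ, w = (m : ℝ) * θ) ∧ w ≤ I t ∧ C t (I t) + K t < C t w} (Ibar t - θ))
    (H V : ℕ → ℝ → ℝ)
    (hHT1 : ∀ y, H (T - 1) y = C (T - 1) y)
    (hST1 : S (T - 1) = Cm (T - 1))
    (hV : ∀ t, t < T → ∀ y, V t y = if y < s t then H t (S t) + K t else H t y)
    (hHrec : ∀ t, t + 2 ≤ T → ∀ y,
      H t y = C t y + α * ∑' n : ℕ, V (t + 1) (y - ((n : ℝ) - 1) * θ) * f t ((n : ℤ) - 1))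
    (hSdef : ∀ t, t + 2 ≤ T →
      IsGreatest {w | (∃ m : ℤ, w = (m : ℝ) * θ) ∧ I t ≤ w ∧ w ≤ SU t ∧
        ∀ u, (∃ n : ℤ, u = (n : ℝ) * θ) → I t ≤ u → u ≤ SU t → H t w ≤ H t u} (S t))
    (hsdef0 : ∀ t, t + 2 ≤ T → K t = 0 → s t = S t)
    (hsdef1 : ∀ t, t + 2 ≤ T → 0 < K t →
      IsLeast {w | (∃ m : ℤ, w = (m : ℝ) * θ) ∧ Ibar t ≤ w ∧ w ≤ S t ∧ H t w ≤ H t (S t) + K t} (s t))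
    (γ : ℕ → ℝ) (hγ : ∀ t, t < T → 0 ≤ γ t)
    (hLip : ∀ t, t < T → ∀ x y, |C t x - C t y| ≤ γ t * |x - y|)
    (psib phib : ℕ → ℝ → ℝ → ℝ)
    (hpsibT1 : ∀ x y : ℝ, psib (T - 1) x y = γ (T - 1) * x)
    (hphibT1 : ∀ x y : ℝ, phib (T - 1) x y = if y < s (T - 1) then 0 else γ (T - 1) * x)
    (hpsibA : ∀ t, t + 2 ≤ T → ∀ x y : ℝ, y < s (t + 1) - θ → psib t x y = γ t * x)
    (hpsibB : ∀ t, t + 2 ≤ T → ∀ x y : ℝ, s (t + 1) - θ ≤ y → ∀ n : ℤ,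
      ((n : ℝ) - 1) * θ ≤ y - s (t + 1) → y - s (t + 1) < (n : ℝ) * θ →
      psib t x y = γ t * x
        + α * ∑ j ∈ Finset.Icc (-1 : ℤ) (n - 1), phib (t + 1) x (y - (j : ℝ) * θ) * f t j)
    (hphib : ∀ t, t + 2 ≤ T → ∀ x y : ℝ, phib t x y =
      if y < s t then 0 else if y - x < s t then psib t (y - s t + θ) y else psib t x y)
    :
    ∀ t, t + 2 ≤ T → ∀ j : ℤ,
      psib t θ ((j : ℝ) * θ) ≤ γ t * θ
        + θ * ∑ n ∈ Finset.Icc 1 (T - 1 - t), α ^ n * γ (t + n)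
            * ∏ m ∈ Finset.range n, F (t + m) ((j : ℝ) * θ + ((m : ℝ) + 1) * θ - s (t + m + 1)) :=
  stmt16_general T α hα0 K hK0 ν hprob F hF θ hθ f hf SU s S I Ibar H hSdef hsdef0 hsdef1 γ hγ psib
    phib hphibT1 hpsibA hpsibB hphib
end
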